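/- arXiv:1808.08884 — 4 statements merged into one kernel-verified Lean document; each statement's English description precedes it below -/
import Mathlib

section
/- Let ρ_0 = |GHZ_N⟩⟨GHZ_N| with |GHZ_N⟩ = (|0⟩^{⊗N} + |1⟩^{⊗N})/√2, and let Λ_t(ρ) = ½(1 + e^{−γt})ρ + ½(1 − e^{−γt})σ_x ρ σ_x be the single-qubit bit-flip channel with γ > 0. Then for every t ≥ 0 the evolved state ρ_t = Λ_t^{⊗N}(ρ_0) is a convex mixture of the ‘plus’ GHZ-basis states |φ_l^+⟩ = (|l_1…l_N⟩ + |l̄_1…l̄_N⟩)/√2, and consequently the relative entropy of coherence is frozen: C_r(ρ_t) = C_r(ρ_0) = 1 for all t ≥ 0. -/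
open Matrix Finset ComplexOrder

/-- The vector `x` sorted in descending order. -/
noncomputable def sortDesc {n : ℕ} (x : Fin n → ℝ) : Fin n → ℝ :=
  fun i => x (Tuple.sort x i.rev)

/-- The sum of the `k` largest entries of `x`. -/
noncomputable def topSum {n : ℕ} (x : Fin n → ℝ) (k : ℕ) : ℝ :=
  ∑ i ∈ Finset.univ.filter (fun i : Fin n => (i : ℕ) < k), sortDesc x i

/-- `Maj b a` means `b ≺ a`, i.e. `a` majorizes `b`. -/
def Maj {n : ℕ} (b a : Fin n → ℝ) : Prop := ∀ k : ℕ, topSum b k ≤ topSum a k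

/-- `p` is a probability vector. -/
def IsProbVec {n : ℕ} (p : Fin n → ℝ) : Prop := (∀ i, 0 ≤ p i) ∧ ∑ i, p i = 1

/-- Shannon entropy (base 2). -/
noncomputable def shannon {ι : Type*} [Fintype ι] (p : ι → ℝ) : ℝ :=
  -∑ i, p i * Real.logb 2 (p i)

/-- A von Neumann measurement: an orthonormal basis of `ℂⁿ`. -/
def IsONB {n : ℕ} (ψ : Fin n → (Fin n → ℂ)) : Prop :=
  ∀ i j, star (ψ i) ⬝ᵥ ψ j = if i = j then 1 else 0

/-- Outcome distribution of the measurement `ψ` on the state `ρ`. -/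
noncomputable def outcome {n : ℕ} (ρ : Matrix (Fin n) (Fin n) ℂ)
    (ψ : Fin n → (Fin n → ℂ)) : Fin n → ℝ :=
  fun i => (star (ψ i) ⬝ᵥ (ρ *ᵥ ψ i)).re

/-- Vector of diagonal entries of `ρ` (real parts). -/
noncomputable def diagVec {n : ℕ} (ρ : Matrix (Fin n) (Fin n) ℂ) : Fin n → ℝ :=
  fun i => (ρ i i).re

/-- `c` is the majorization join of `a` and `b`. -/
def IsMajJoin {n : ℕ} (a b c : Fin n → ℝ) : Prop :=
  IsProbVec c ∧ Maj a c ∧ Maj b c ∧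
    ∀ c', IsProbVec c' → Maj a c' → Maj b c' → Maj c c'

/-- `c` is the majorization meet of the set `X`. -/
def IsMajMeet {n : ℕ} (X : Set (Fin n → ℝ)) (c : Fin n → ℝ) : Prop :=
  IsProbVec c ∧ (∀ p ∈ X, Maj c p) ∧
    ∀ c', IsProbVec c' → (∀ p ∈ X, Maj c' p) → Maj c' c


/-- The `plus` GHZ basis state `|φ_l⁺⟩ = (|l⟩ + |l̄⟩)/√2`, as a vector in the
computational basis of `N` qubits. -/
noncomputable def ghzPlus (N : ℕ) (l : Fin N → Bool) : (Fin N → Bool) → ℂ :=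
  fun b => (((Real.sqrt 2 : ℝ) : ℂ))⁻¹ *
    ((if b = l then 1 else 0) + (if b = (fun i => ! l i) then 1 else 0))

/- ======================= Auxiliary material ======================= -/

namespace Stmt12Aux

open Polynomial

variable {N : ℕ}

/-- Bitwise negation of a bit string. -/
def nb (l : Fin N → Bool) : Fin N → Bool := fun i => ! l i

lemma nb_nb (l : Fin N → Bool) : nb (nb l) = l := by funext i; simp [nb]

lemma nb_ne (hN : 0 < N) (l : Fin N → Bool) : nb l ≠ l := by
  intro h
  have := congrFun h ⟨0, hN⟩
  simp [nb] at this

lemma nb_inj {a b : Fin N → Bool} (h : nb a = nb b) : a = b := by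
  rw [← nb_nb a, h, nb_nb]

lemma eq_nb_comm {a b : Fin N → Bool} : a = nb b ↔ b = nb a := by
  constructor
  · rintro rfl; rw [nb_nb]
  · rintro rfl; rw [nb_nb]

lemma nb_eq_iff {a b : Fin N → Bool} : (nb a = nb b) ↔ a = b :=
  ⟨nb_inj, fun h => by rw [h]⟩

noncomputable def c1 : ℂ := (((Real.sqrt 2 : ℝ)) : ℂ)⁻¹

lemma c1_mul_c1 : c1 * c1 = (2 : ℂ)⁻¹ := by
  rw [c1, ← mul_inv, ← Complex.ofReal_mul, Real.mul_self_sqrt (by norm_num)]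
  norm_num

lemma c1_star : star c1 = c1 := by
  rw [c1, star_inv₀, Complex.star_def, Complex.conj_ofReal]

lemma sum_delta4 {I : Type*} [Fintype I] [DecidableEq I]
    (P : I → ℂ) (c d e f : ℂ) (x₁ x₂ y₁ y₂ : I) (hx : x₁ ≠ x₂) :
    ∑ b, P b * ((c * (if b = x₁ then 1 else 0) + d * (if b = x₂ then 1 else 0)) *
      (e * (if b = y₁ then 1 else 0) + f * (if b = y₂ then 1 else 0))) =
    (if x₁ = y₁ then c * e * P x₁ else 0) + (if x₁ = y₂ then c * f * P x₁ else 0) +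
    (if x₂ = y₁ then d * e * P x₂ else 0) + (if x₂ = y₂ then d * f * P x₂ else 0) := by
  rw [Finset.sum_eq_add_of_mem x₁ x₂ (mem_univ _) (mem_univ _) hx ?_]
  · simp only [if_pos rfl, if_neg hx, if_neg (Ne.symm hx), mul_one, mul_zero]
    split_ifs <;> ring
  · intro b _ hb
    simp only [if_neg hb.1, if_neg hb.2, mul_zero, zero_add, add_zero]
    ring

lemma ghz_apply (l b : Fin N → Bool) :
    ghzPlus N l b = c1 * ((if l = b then 1 else 0) + (if l = nb b then 1 else 0)) := by
  unfold ghzPlus c1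
  congr 1
  refine congrArg₂ (· + ·) ?_ ?_
  · exact if_congr eq_comm rfl rfl
  · exact if_congr (show b = nb l ↔ l = nb b from eq_nb_comm) rfl rfl

lemma ghz_star (l b : Fin N → Bool) : star (ghzPlus N l b) = ghzPlus N l b := by
  unfold ghzPlus
  rw [star_mul', star_add, apply_ite (star : ℂ → ℂ), apply_ite (star : ℂ → ℂ),
    star_one, star_zero, star_inv₀,
    show star ((Real.sqrt 2 : ℝ) : ℂ) = ((Real.sqrt 2 : ℝ) : ℂ) from by
      rw [Complex.star_def, Complex.conj_ofReal]]

lemma xb1 (x y : Bool) : (xor x y = false) ↔ (y = x) := by cases x <;> cases y <;> simp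

lemma xb2 (x y : Bool) : (xor x y = true) ↔ (y = ! x) := by cases x <;> cases y <;> simp

lemma ghz_zero_flip (b f : Fin N → Bool) :
    ghzPlus N (fun _ => false) (fun i => xor (b i) (f i)) =
      c1 * ((if f = b then 1 else 0) + (if f = nb b then 1 else 0)) := by
  unfold ghzPlus c1
  congr 1
  refine congrArg₂ (· + ·) ?_ ?_
  · refine if_congr ?_ rfl rfl
    rw [funext_iff, funext_iff]
    exact forall_congr' fun i => xb1 _ _
  · refine if_congr ?_ rfl rfl
    rw [funext_iff, funext_iff]
    refine forall_congr' fun i => ?_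
    simpa [nb] using xb2 (b i) (f i)

lemma ghz_mix_sum (hN : 0 < N) (q' : (Fin N → Bool) → ℂ) (b b' : Fin N → Bool) :
    ∑ l, q' l * ghzPlus N l b * star (ghzPlus N l b') =
      (2 : ℂ)⁻¹ * ((if b' = b then q' b + q' (nb b) else 0) +
        (if b' = nb b then q' b + q' (nb b) else 0)) := by
  have step : ∀ l, q' l * ghzPlus N l b * star (ghzPlus N l b') =
      (c1 * c1) * (q' l *
        (((1:ℂ) * (if l = b then 1 else 0) + (1:ℂ) * (if l = nb b then 1 else 0)) *
         ((1:ℂ) * (if l = b' then 1 else 0) + (1:ℂ) * (if l = nb b' then 1 else 0)))) := by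
    intro l
    rw [ghz_star, ghz_apply, ghz_apply]
    ring
  rw [Finset.sum_congr rfl fun l _ => step l, ← Finset.mul_sum,
    sum_delta4 q' 1 1 1 1 b (nb b) b' (nb b') (Ne.symm (nb_ne hN b)), c1_mul_c1]
  congr 1
  have h1 : (b = b') = (b' = b) := propext eq_comm
  have h2 : (b = nb b') = (b' = nb b) := propext eq_nb_comm
  have h3 : (nb b = b') = (b' = nb b) := propext eq_comm
  have h4 : (nb b = nb b') = (b' = b) := propext (nb_eq_iff.trans eq_comm)
  simp only [h1, h2, h3, h4]
  split_ifs <;> ring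

lemma flip_sum (hN : 0 < N) (P' : (Fin N → Bool) → ℂ) (b b' : Fin N → Bool) :
    ∑ f, P' f * (ghzPlus N (fun _ => false) (fun i => xor (b i) (f i)) *
      star (ghzPlus N (fun _ => false) (fun i => xor (b' i) (f i)))) =
      (2 : ℂ)⁻¹ * ((if b' = b then P' b + P' (nb b) else 0) +
        (if b' = nb b then P' b + P' (nb b) else 0)) := by
  have hst : ∀ (x : Fin N → Bool), star (ghzPlus N (fun _ => false) x)
      = ghzPlus N (fun _ => false) x := fun x => ghz_star _ _
  have step : ∀ f, P' f * (ghzPlus N (fun _ => false) (fun i => xor (b i) (f i)) *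
      star (ghzPlus N (fun _ => false) (fun i => xor (b' i) (f i)))) =
      (c1 * c1) * (P' f *
        (((1:ℂ) * (if f = b then 1 else 0) + (1:ℂ) * (if f = nb b then 1 else 0)) *
         ((1:ℂ) * (if f = b' then 1 else 0) + (1:ℂ) * (if f = nb b' then 1 else 0)))) := by
    intro f
    rw [hst, ghz_zero_flip, ghz_zero_flip]
    ring
  rw [Finset.sum_congr rfl fun f _ => step f, ← Finset.mul_sum,
    sum_delta4 P' 1 1 1 1 b (nb b) b' (nb b') (Ne.symm (nb_ne hN b)), c1_mul_c1]
  congr 1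
  have h1 : (b = b') = (b' = b) := propext eq_comm
  have h2 : (b = nb b') = (b' = nb b) := propext eq_nb_comm
  have h3 : (nb b = b') = (b' = nb b) := propext eq_comm
  have h4 : (nb b = nb b') = (b' = b) := propext (nb_eq_iff.trans eq_comm)
  simp only [h1, h2, h3, h4]
  split_ifs <;> ring

lemma sum_pair {M : Type*} [AddCommMonoid M] (i0 : Fin N) (g : (Fin N → Bool) → M) :
    ∑ b, g b = ∑ b ∈ Finset.univ.filter (fun b => b i0 = false), (g b + g (nb b)) := by
  rw [Finset.sum_add_distrib]
  have h2 : ∑ b ∈ Finset.univ.filter (fun b => b i0 = false), g (nb b)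
      = ∑ b ∈ Finset.univ.filter (fun b => b i0 = true), g b := by
    refine Finset.sum_nbij' (fun b => nb b) (fun b => nb b) ?_ ?_ ?_ ?_ ?_
    · intro a ha; simp only [mem_filter, mem_univ, true_and] at ha ⊢; simp [nb, ha]
    · intro a ha; simp only [mem_filter, mem_univ, true_and] at ha ⊢; simp [nb, ha]
    · intro a _; exact nb_nb a
    · intro a _; exact nb_nb a
    · intro a _; rfl
  rw [h2]
  rw [← Finset.sum_filter_add_sum_filter_not Finset.univ (fun b => b i0 = false) g]
  congr 1
  apply Finset.sum_congr ?_ (fun _ _ => rfl)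
  apply Finset.filter_congr
  intro b _
  simp

lemma xlogx_half (x : ℝ) (hx : 0 ≤ x) :
    2 * ((x / 2) * Real.logb 2 (x / 2)) = x * Real.logb 2 x - x := by
  rcases eq_or_lt_of_le hx with h | h
  · simp [← h]
  · rw [Real.logb_div (ne_of_gt h) two_ne_zero, Real.logb_self_eq_one (by norm_num)]
    ring

lemma shannon_congr {ι : Type*} [Fintype ι] {p p' : ι → ℝ}
    (h : Multiset.map p Finset.univ.val = Multiset.map p' Finset.univ.val) :
    shannon p = shannon p' := by
  unfold shannon
  congr 1
  have key : ∀ r : ι → ℝ, ∑ i, r i * Real.logb 2 (r i)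
      = ((Multiset.map r Finset.univ.val).map (fun x => x * Real.logb 2 x)).sum := by
    intro r
    rw [Multiset.map_map]
    rfl
  rw [key, key, h]

lemma charpoly_similar {n : Type*} [Fintype n] [DecidableEq n]
    (U A : Matrix n n ℂ) (hU : Uᴴ * U = 1) : (U * A * Uᴴ).charpoly = A.charpoly := by
  have hU' : U * Uᴴ = 1 := mul_eq_one_comm.mpr hU
  have h1 : U.map (⇑(Polynomial.C : ℂ →+* ℂ[X])) * Uᴴ.map (⇑(Polynomial.C : ℂ →+* ℂ[X])) = 1 := by
    rw [← Matrix.map_mul, hU', Matrix.map_one _ (map_zero _) (map_one _)]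
  have key : charmatrix (U * A * Uᴴ) =
      U.map (⇑(Polynomial.C : ℂ →+* ℂ[X])) * charmatrix A *
        Uᴴ.map (⇑(Polynomial.C : ℂ →+* ℂ[X])) := by
    simp only [charmatrix, RingHom.mapMatrix_apply]
    rw [Matrix.map_mul, Matrix.map_mul, mul_sub, sub_mul]
    congr 1
    have hc := Matrix.scalar_commute (X : ℂ[X]) (fun r' => Commute.all _ _)
      (U.map (⇑(Polynomial.C : ℂ →+* ℂ[X])))
    rw [← hc.eq, mul_assoc, h1, mul_one]
  unfold Matrix.charpoly
  rw [key, Matrix.det_mul, Matrix.det_mul]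
  have h2 : (U.map (⇑(Polynomial.C : ℂ →+* ℂ[X]))).det *
      (Uᴴ.map (⇑(Polynomial.C : ℂ →+* ℂ[X]))).det = 1 := by
    rw [← Matrix.det_mul, h1, Matrix.det_one]
  calc (U.map (⇑(Polynomial.C : ℂ →+* ℂ[X]))).det * (charmatrix A).det *
        (Uᴴ.map (⇑(Polynomial.C : ℂ →+* ℂ[X]))).det
      = ((U.map (⇑(Polynomial.C : ℂ →+* ℂ[X]))).det *
          (Uᴴ.map (⇑(Polynomial.C : ℂ →+* ℂ[X]))).det) * (charmatrix A).det := by ring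
    _ = (charmatrix A).det := by rw [h2, one_mul]

lemma charpoly_diag {n : Type*} [Fintype n] [DecidableEq n] (d : n → ℂ) :
    (Matrix.diagonal d).charpoly = ∏ i, (X - Polynomial.C (d i)) := by
  unfold Matrix.charpoly
  have key : charmatrix (Matrix.diagonal d)
      = Matrix.diagonal (fun i => (X : ℂ[X]) - Polynomial.C (d i)) := by
    refine Matrix.ext fun i j => ?_
    by_cases h : i = j
    · subst h; simp [charmatrix_apply_eq, Matrix.diagonal_apply_eq]
    · simp [charmatrix_apply_ne _ _ _ h, Matrix.diagonal_apply_ne _ h]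
  rw [key, Matrix.det_diagonal]

lemma eig_multiset {n : Type*} [Fintype n] [DecidableEq n]
    (ρ U : Matrix n n ℂ) (d : n → ℝ) (hU : Uᴴ * U = 1)
    (hρ : ρ = U * Matrix.diagonal (fun i => (d i : ℂ)) * Uᴴ)
    (h : ρ.IsHermitian) :
    Multiset.map h.eigenvalues Finset.univ.val = Multiset.map d Finset.univ.val := by
  have e1 : ρ.charpoly = ∏ i, (X - Polynomial.C ((d i : ℂ))) := by
    rw [hρ, charpoly_similar U _ hU, charpoly_diag]
  have hV : (↑(h.eigenvectorUnitary) : Matrix n n ℂ)ᴴ * (↑(h.eigenvectorUnitary) : Matrix n n ℂ)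
      = 1 := by
    rw [← Matrix.star_eq_conjTranspose]
    exact (Unitary.mem_iff.mp h.eigenvectorUnitary.2).1
  have e2 : ρ.charpoly = ∏ i, (X - Polynomial.C ((h.eigenvalues i : ℂ))) := by
    conv_lhs => rw [h.spectral_theorem]
    rw [Unitary.conjStarAlgAut_apply, Matrix.star_eq_conjTranspose, charpoly_similar _ _ hV]
    have : (RCLike.ofReal ∘ h.eigenvalues : n → ℂ) = fun i => ((h.eigenvalues i : ℝ) : ℂ) := rfl
    rw [this, charpoly_diag]
  have e3 := e1.symm.trans e2
  have conv : ∀ f : n → ℂ, (∏ i, (X - Polynomial.C (f i)))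
      = ((Finset.univ.val.map f).map (fun a => X - Polynomial.C a)).prod := by
    intro f
    rw [Finset.prod_eq_multiset_prod, Multiset.map_map]
    rfl
  rw [conv, conv] at e3
  have e4 := congrArg Polynomial.roots e3
  rw [Polynomial.roots_multiset_prod_X_sub_C, Polynomial.roots_multiset_prod_X_sub_C] at e4
  have e5 : Multiset.map Complex.ofReal (Multiset.map d Finset.univ.val)
      = Multiset.map Complex.ofReal (Multiset.map h.eigenvalues Finset.univ.val) := by
    rw [Multiset.map_map, Multiset.map_map]
    exact e4
  exact (Multiset.map_injective Complex.ofReal_injective e5).symm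

/-- Sign of the GHZ basis element indexed by `l`. -/
noncomputable def sgn (i0 : Fin N) (l : Fin N → Bool) : ℂ := if l i0 then -1 else 1

lemma sgn_mul_self (i0 : Fin N) (l : Fin N → Bool) : sgn i0 l * sgn i0 l = 1 := by
  unfold sgn; split_ifs <;> norm_num

lemma sgn_nb (i0 : Fin N) (l : Fin N → Bool) : sgn i0 (nb l) = - sgn i0 l := by
  cases h : l i0 <;> simp [sgn, nb, h]

lemma sgn_star (i0 : Fin N) (l : Fin N → Bool) : star (sgn i0 l) = sgn i0 l := by
  unfold sgn; split_ifs <;> simp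

/-- The unitary whose columns are the full GHZ basis. -/
noncomputable def Umat (i0 : Fin N) : Matrix (Fin N → Bool) (Fin N → Bool) ℂ :=
  Matrix.of fun b l => c1 * ((if b = l then 1 else 0) + sgn i0 l * (if b = nb l then 1 else 0))

lemma Umat_star (i0 : Fin N) (b l : Fin N → Bool) :
    star (Umat i0 b l) = Umat i0 b l := by
  unfold Umat
  simp only [Matrix.of_apply]
  rw [star_mul', star_add, star_mul', sgn_star, apply_ite (star : ℂ → ℂ),
    apply_ite (star : ℂ → ℂ), star_one, star_zero, c1_star]

lemma Umat_unitary (hN : 0 < N) (i0 : Fin N) : (Umat i0)ᴴ * Umat i0 = 1 := by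
  refine Matrix.ext fun l m => ?_
  rw [Matrix.mul_apply]
  have step : ∀ b, (Umat i0)ᴴ l b * Umat i0 b m =
      (fun _ : Fin N → Bool => c1 * c1) b *
        (((1:ℂ) * (if b = l then 1 else 0) + sgn i0 l * (if b = nb l then 1 else 0)) *
         ((1:ℂ) * (if b = m then 1 else 0) + sgn i0 m * (if b = nb m then 1 else 0))) := by
    intro b
    rw [Matrix.conjTranspose_apply, Umat_star]
    unfold Umat
    simp only [Matrix.of_apply]
    ring
  rw [Finset.sum_congr rfl fun b _ => step b,
    sum_delta4 _ 1 (sgn i0 l) 1 (sgn i0 m) l (nb l) m (nb m) (Ne.symm (nb_ne hN l))]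
  have h3 : (nb l = m) = (l = nb m) := propext (eq_comm.trans eq_nb_comm)
  have h4 : (nb l = nb m) = (l = m) := propext nb_eq_iff
  simp only [h3, h4, one_mul, mul_one]
  by_cases hlm : l = m
  · subst hlm
    rw [Matrix.one_apply_eq, if_pos rfl,
      if_neg (show ¬ l = nb l from fun hh => nb_ne hN l hh.symm)]
    simp only [mul_zero, zero_mul, add_zero, zero_add, mul_one, one_mul]
    rw [sgn_mul_self, c1_mul_c1]
    norm_num
  · rw [Matrix.one_apply_ne hlm, if_neg hlm, if_neg hlm]
    by_cases hlnb : l = nb m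
    · rw [if_pos hlnb, if_pos hlnb]
      have : sgn i0 l = - sgn i0 m := by rw [hlnb, sgn_nb]
      rw [this]
      ring
    · rw [if_neg hlnb, if_neg hlnb]
      ring

lemma Umat_eq_ghz (i0 : Fin N) {l : Fin N → Bool} (hl : l i0 = false) (x : Fin N → Bool) :
    Umat i0 x l = ghzPlus N l x := by
  unfold Umat sgn ghzPlus nb c1
  simp [hl]

/-- Main entropy lemma: a mixture of `plus` GHZ states has
`S(diag) - S(eigenvalues) = 1`. -/
lemma entropy_frozen (hN : 0 < N) (q : (Fin N → Bool) → ℝ)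
    (hq0 : ∀ l, 0 ≤ q l) (hsupp : ∀ l, l ⟨0, hN⟩ = true → q l = 0)
    (hsum : ∑ l, q l = 1)
    (ρ : Matrix (Fin N → Bool) (Fin N → Bool) ℂ)
    (hρ : ρ = Matrix.of fun b b' =>
      ∑ l, (q l : ℂ) * ghzPlus N l b * star (ghzPlus N l b'))
    (h : ρ.IsHermitian) :
    shannon (fun b => (ρ b b).re) - shannon h.eigenvalues = 1 := by
  set i0 : Fin N := ⟨0, hN⟩ with hi0
  have hsupp' : ∀ b : Fin N → Bool, b i0 = false → q (nb b) = 0 := by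
    intro b hb
    exact hsupp (nb b) (by simp [nb, hb])
  -- diagonal entries
  have hdiag : (fun b => (ρ b b).re) = fun b => (q b + q (nb b)) / 2 := by
    funext b
    have hb : ρ b b = (((q b + q (nb b)) / 2 : ℝ) : ℂ) := by
      rw [hρ]
      simp only [Matrix.of_apply]
      rw [ghz_mix_sum hN (fun l => ((q l : ℝ) : ℂ)) b b,
        if_pos rfl, if_neg (show ¬ b = nb b from fun hh => nb_ne hN b hh.symm)]
      push_cast
      ring
    rw [hb, Complex.ofReal_re]
  -- the eigenvalue multiset is `q`
  have hρU : ρ = Umat i0 * Matrix.diagonal (fun l => ((q l : ℝ) : ℂ)) * (Umat i0)ᴴ := by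
    rw [hρ]
    refine Matrix.ext fun b b' => ?_
    rw [Matrix.mul_assoc, Matrix.mul_apply]
    simp only [Matrix.of_apply]
    refine Finset.sum_congr rfl fun l _ => ?_
    rw [Matrix.diagonal_mul, Matrix.conjTranspose_apply]
    by_cases hl : l i0 = true
    · rw [hsupp l hl]
      simp
    · have hl' : l i0 = false := by simpa using hl
      rw [Umat_eq_ghz i0 hl', Umat_eq_ghz i0 hl']
      ring
  have heig : Multiset.map h.eigenvalues Finset.univ.val
      = Multiset.map q Finset.univ.val :=
    eig_multiset ρ (Umat i0) q (Umat_unitary hN i0) hρU h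
  have hse : shannon h.eigenvalues = shannon q := shannon_congr heig
  -- entropy of the diagonal
  set F : Finset (Fin N → Bool) := Finset.univ.filter (fun b => b i0 = false) with hF
  have hmemF : ∀ b ∈ F, b i0 = false := by
    intro b hb
    exact (Finset.mem_filter.mp hb).2
  have hsF : ∑ b ∈ F, q b = 1 := by
    have e6 : ∑ b ∈ F, (q b + q (nb b)) = ∑ b ∈ F, q b :=
      Finset.sum_congr rfl fun b hb => by rw [hsupp' b (hmemF b hb), add_zero]
    rw [← e6, ← sum_pair i0 q]
    exact hsum
  have hshq' : ∑ l, q l * Real.logb 2 (q l) = ∑ b ∈ F, q b * Real.logb 2 (q b) := by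
    rw [sum_pair i0 (fun l => q l * Real.logb 2 (q l))]
    exact Finset.sum_congr rfl fun b hb => by
      rw [hsupp' b (hmemF b hb), zero_mul, add_zero]
  have hshd : shannon (fun b => (ρ b b).re) = shannon q + 1 := by
    rw [hdiag]
    unfold shannon
    rw [sum_pair i0 (fun b => ((q b + q (nb b)) / 2) * Real.logb 2 ((q b + q (nb b)) / 2))]
    have e7 : ∀ b ∈ F,
        ((q b + q (nb b)) / 2) * Real.logb 2 ((q b + q (nb b)) / 2) +
          ((q (nb b) + q (nb (nb b))) / 2) * Real.logb 2 ((q (nb b) + q (nb (nb b))) / 2)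
        = q b * Real.logb 2 (q b) - q b := by
      intro b hb
      rw [hsupp' b (hmemF b hb), nb_nb, add_zero, zero_add]
      have := xlogx_half (q b) (hq0 b)
      linarith
    rw [Finset.sum_congr rfl e7, Finset.sum_sub_distrib, hsF, hshq']
    ring
  rw [hshd, hse]
  ring

lemma sum_prod_bool {N : ℕ} (A B : ℝ) (h : A + B = 1) :
    ∑ f : Fin N → Bool, (∏ i, if f i then A else B) = 1 := by
  rw [← Fintype.prod_sum (fun (_ : Fin N) (b : Bool) => if b then A else B)]
  simp [Fintype.sum_bool, h]

end Stmt12Aux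

open Stmt12Aux in
theorem stmt12 (N : ℕ) (hN : 2 ≤ N) (γ t : ℝ) (hγ : 0 < γ) (ht : 0 ≤ t)
    (ρ₀ ρt : Matrix (Fin N → Bool) (Fin N → Bool) ℂ)
    (hρ₀ : ρ₀ = Matrix.of fun b b' =>
      ghzPlus N (fun _ => false) b * star (ghzPlus N (fun _ => false) b'))
    (hρt : ρt = Matrix.of fun b b' =>
      ∑ f : Fin N → Bool,
        ((∏ i, (if f i then (1 - (1 + Real.exp (-(γ * t))) / 2)
            else (1 + Real.exp (-(γ * t))) / 2) : ℝ) : ℂ) *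
          ρ₀ (fun i => xor (b i) (f i)) (fun i => xor (b' i) (f i))) :
    (∃ q : (Fin N → Bool) → ℝ, (∀ l, 0 ≤ q l) ∧
      (∀ l : Fin N → Bool, l ⟨0, by omega⟩ = true → q l = 0) ∧
      (∑ l, q l) = 1 ∧
      ρt = Matrix.of fun b b' =>
        ∑ l, (q l : ℂ) * ghzPlus N l b * star (ghzPlus N l b')) ∧
    (∀ h : ρt.IsHermitian,
      shannon (fun b => (ρt b b).re) - shannon h.eigenvalues = 1) ∧
    (∀ h : ρ₀.IsHermitian,
      shannon (fun b => (ρ₀ b b).re) - shannon h.eigenvalues = 1) := by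
  have hN0 : 0 < N := by omega
  set i0 : Fin N := ⟨0, hN0⟩ with hi0
  set P : (Fin N → Bool) → ℝ := fun f => ∏ i, (if f i then (1 - (1 + Real.exp (-(γ * t))) / 2)
      else (1 + Real.exp (-(γ * t))) / 2) with hP
  set q : (Fin N → Bool) → ℝ := fun l => if l i0 = true then 0 else P l + P (nb l) with hq
  have hexp0 : 0 < Real.exp (-(γ * t)) := Real.exp_pos _
  have hexp1 : Real.exp (-(γ * t)) ≤ 1 := by
    rw [Real.exp_le_one_iff]
    nlinarith
  have hP0 : ∀ f, 0 ≤ P f := by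
    intro f
    refine Finset.prod_nonneg fun i _ => ?_
    split_ifs <;> linarith
  have hPsum : ∑ f, P f = 1 := sum_prod_bool _ _ (by ring)
  have hq0 : ∀ l, 0 ≤ q l := by
    intro l
    rw [hq]
    dsimp only
    split_ifs
    · exact le_refl 0
    · exact add_nonneg (hP0 l) (hP0 (nb l))
  have hsupp : ∀ l : Fin N → Bool, l i0 = true → q l = 0 := by
    intro l hl
    rw [hq]
    exact if_pos hl
  have hqP : ∀ b : Fin N → Bool, q b + q (nb b) = P b + P (nb b) := by
    intro b
    rw [hq]
    dsimp only
    cases hb : b i0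
    · simp [nb, hb]
    · simp only [nb_nb]
      simp [nb, hb, add_comm]
  have hqsum : ∑ l, q l = 1 := by
    rw [sum_pair i0 q, Finset.sum_congr rfl (fun b _ => hqP b), ← sum_pair i0 P]
    exact hPsum
  have hmix : ρt = Matrix.of fun b b' =>
      ∑ l, (q l : ℂ) * ghzPlus N l b * star (ghzPlus N l b') := by
    rw [hρt, hρ₀]
    refine Matrix.ext fun b b' => ?_
    simp only [Matrix.of_apply]
    rw [flip_sum hN0 (fun f => ((P f : ℝ) : ℂ)) b b',
      ghz_mix_sum hN0 (fun l => ((q l : ℝ) : ℂ)) b b']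
    by_cases h1 : b' = b <;> by_cases h2 : b' = nb b <;>
      simp only [h1, h2, if_true, if_false, reduceIte] <;>
      norm_cast <;>
      simp [hqP b]
  refine ⟨⟨q, hq0, fun l hl => hsupp l hl, hqsum, hmix⟩, ?_, ?_⟩
  · intro h
    exact entropy_frozen hN0 q hq0 hsupp hqsum ρt hmix h
  · intro h
    refine entropy_frozen hN0 (fun l => if l = (fun _ => false) then 1 else 0)
      ?_ ?_ ?_ ρ₀ ?_ h
    · intro l
      split_ifs <;> norm_num
    · intro l hl
      rw [if_neg]
      intro hcon
      rw [hcon] at hl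
      simp at hl
    · simp
    · rw [hρ₀]
      refine Matrix.ext fun b b' => ?_
      simp only [Matrix.of_apply]
      rw [Finset.sum_eq_single ((fun _ => false) : Fin N → Bool)]
      · rw [if_pos rfl]
        push_cast
        rw [one_mul]
      · intro l _ hl
        rw [if_neg hl]
        push_cast
        rw [zero_mul, zero_mul]
      · intro hmem
        exact absurd (Finset.mem_univ _) hmem
end

section
/- Let ρ be an n×n density matrix with diagonal-entry vector d and eigenvalue vector λ, and define the l₂ norm of coherence C_{l₂}(ρ) = Σ_{i≠j} |ρ_{ij}|². Then C_{l₂}(ρ) = S_L(d) − S_L(λ), where S_L(p) = 1 − Σ_i p_i² is the linear (Tsallis-2) entropy; moreover, if p is the outcome distribution of any von Neumann measurement on ρ, then C_{l₂}(ρ) ≥ S_L(d) − S_L(d∨p), and this bound is strictly positive whenever p ⊀ d. -/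
open Matrix Finset ComplexOrder

section helpers
variable {n : ℕ}

lemma sortDesc_anti (x : Fin n → ℝ) : Antitone (sortDesc x) := by
  intro i j hij
  exact Tuple.monotone_sort x (Fin.rev_le_rev.mpr hij)

/-- the permutation `i ↦ sort x i.rev` -/
noncomputable def descPerm (x : Fin n → ℝ) : Equiv.Perm (Fin n) :=
  Fin.revPerm.trans (Tuple.sort x)

lemma sortDesc_eq (x : Fin n → ℝ) (i : Fin n) : sortDesc x i = x (descPerm x i) := rfl

lemma sum_comp_sortDesc (f : ℝ → ℝ) (x : Fin n → ℝ) :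
    ∑ i, f (sortDesc x i) = ∑ i, f (x i) := by
  simp only [sortDesc_eq]
  exact Equiv.sum_comp (descPerm x) (fun j => f (x j))

/-- extension of `sortDesc x` to ℕ by zero -/
noncomputable def extD (x : Fin n → ℝ) : ℕ → ℝ :=
  fun k => if h : k < n then sortDesc x ⟨k, h⟩ else 0

lemma extD_eq (x : Fin n → ℝ) (i : Fin n) : extD x i = sortDesc x i := by
  simp [extD, Fin.is_lt]

lemma topSum_eq_range (x : Fin n → ℝ) (k : ℕ) :
    topSum x k = ∑ i ∈ Finset.range k, extD x i := by
  have h1 : topSum x k = ∑ i : Fin n, if (i : ℕ) < k then extD x i else 0 := by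
    rw [topSum, Finset.sum_filter]
    exact Finset.sum_congr rfl fun i _ => by rw [extD_eq]
  rw [h1, Fin.sum_univ_eq_sum_range (fun m => if m < k then extD x m else 0)]
  have h2 : (∑ i ∈ Finset.range n, if i < k then extD x i else 0)
      = ∑ i ∈ Finset.range (max k n), if i < k then extD x i else 0 := by
    refine Finset.sum_subset (Finset.range_subset_range.mpr (le_max_right k n)) ?_
    intro m _ hm'
    simp only [Finset.mem_range, not_lt] at hm'
    simp [extD, Nat.not_lt.mpr hm']
  have h3 : (∑ i ∈ Finset.range k, extD x i)
      = ∑ i ∈ Finset.range (max k n), if i < k then extD x i else 0 := by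
    rw [show (∑ i ∈ Finset.range k, extD x i)
        = ∑ i ∈ Finset.range k, if i < k then extD x i else 0 from
      Finset.sum_congr rfl fun m hm => (if_pos (Finset.mem_range.mp hm)).symm]
    refine Finset.sum_subset (Finset.range_subset_range.mpr (le_max_left k n)) ?_
    intro m _ hm'
    simp only [Finset.mem_range, not_lt] at hm'
    simp [Nat.not_lt.mpr hm']
  rw [h2, h3]

lemma sum_extD_range (x : Fin n → ℝ) : ∑ i ∈ Finset.range n, extD x i = ∑ i, x i := by
  rw [← Fin.sum_univ_eq_sum_range (extD x)]
  rw [show (∑ i : Fin n, extD x i) = ∑ i : Fin n, sortDesc x i from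
    Finset.sum_congr rfl fun i _ => extD_eq x i]
  exact sum_comp_sortDesc id x

lemma sum_sq_extD_range (x : Fin n → ℝ) :
    ∑ i ∈ Finset.range n, (extD x i) ^ 2 = ∑ i, (x i) ^ 2 := by
  rw [← Fin.sum_univ_eq_sum_range (fun m => (extD x m) ^ 2)]
  rw [show (∑ i : Fin n, (extD x i) ^ 2) = ∑ i : Fin n, (sortDesc x i) ^ 2 from
    Finset.sum_congr rfl fun i _ => by rw [extD_eq]]
  exact sum_comp_sortDesc (fun t => t ^ 2) x

lemma topSum_total (x : Fin n → ℝ) {k : ℕ} (hk : n ≤ k) : topSum x k = ∑ i, x i := by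
  rw [topSum_eq_range, ← sum_extD_range x]
  refine (Finset.sum_subset (Finset.range_subset_range.mpr hk) ?_).symm
  intro m _ hm'
  simp only [Finset.mem_range, not_lt] at hm'
  simp [extD, Nat.not_lt.mpr hm']

lemma extD_anti {x : Fin n → ℝ} (hx : ∀ i, 0 ≤ x i) : Antitone (extD x) := by
  intro j k hjk
  by_cases hk : k < n
  · have hj : j < n := lt_of_le_of_lt hjk hk
    rw [extD, dif_pos hk, extD, dif_pos hj]
    exact sortDesc_anti x (show (⟨j, hj⟩ : Fin n) ≤ ⟨k, hk⟩ from hjk)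
  · rw [extD, dif_neg hk]
    by_cases hj : j < n
    · rw [extD, dif_pos hj]
      rw [sortDesc_eq]; exact hx _
    · rw [extD, dif_neg hj]

end helpers

section abel
variable {n : ℕ}

lemma abel_nonneg {x y : Fin n → ℝ} (hx : ∀ i, 0 ≤ x i)
    (hsum : ∑ i, x i = ∑ i, y i) (hmaj : Maj x y) :
    0 ≤ ∑ i ∈ Finset.range n, extD x i * (extD y i - extD x i) := by
  set a := extD x with ha
  set c : ℕ → ℝ := fun i => extD y i - extD x i with hcdef
  have hC : ∀ k, (∑ i ∈ Finset.range k, c i) = topSum y k - topSum x k := by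
    intro k
    rw [Finset.sum_sub_distrib, ← topSum_eq_range, ← topSum_eq_range]
  have hCnn : ∀ k, 0 ≤ ∑ i ∈ Finset.range k, c i := fun k => by
    rw [hC]; linarith [hmaj k]
  have hCn : (∑ i ∈ Finset.range n, c i) = 0 := by
    rw [hC, topSum_total x le_rfl, topSum_total y le_rfl, hsum]; ring
  have habel := Finset.sum_range_by_parts a c n
  simp only [smul_eq_mul] at habel
  rw [habel, hCn, mul_zero, zero_sub, neg_nonneg]
  refine Finset.sum_nonpos fun i _ => ?_
  have h1 : a (i+1) - a i ≤ 0 := by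
    have := extD_anti hx (Nat.le_succ i)
    linarith
  exact mul_nonpos_of_nonpos_of_nonneg h1 (hCnn (i+1))

lemma sq_sum_le_of_maj {x y : Fin n → ℝ} (hx : ∀ i, 0 ≤ x i)
    (hsum : ∑ i, x i = ∑ i, y i) (hmaj : Maj x y) :
    ∑ i, (x i) ^ 2 + ∑ i ∈ Finset.range n, (extD y i - extD x i) ^ 2 ≤ ∑ i, (y i) ^ 2 := by
  have key : ∑ i ∈ Finset.range n, (extD y i) ^ 2
      = ∑ i ∈ Finset.range n, ((extD x i) ^ 2 + 2 * (extD x i * (extD y i - extD x i))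
          + (extD y i - extD x i) ^ 2) :=
    Finset.sum_congr rfl fun i _ => by ring
  rw [Finset.sum_add_distrib, Finset.sum_add_distrib, ← Finset.mul_sum] at key
  have h0 := abel_nonneg hx hsum hmaj
  have h1 := sum_sq_extD_range x
  have h2 := sum_sq_extD_range y
  nlinarith

lemma sq_sum_le_of_maj' {x y : Fin n → ℝ} (hx : ∀ i, 0 ≤ x i)
    (hsum : ∑ i, x i = ∑ i, y i) (hmaj : Maj x y) :
    ∑ i, (x i) ^ 2 ≤ ∑ i, (y i) ^ 2 := by
  have := sq_sum_le_of_maj hx hsum hmaj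
  have h2 : 0 ≤ ∑ i ∈ Finset.range n, (extD y i - extD x i) ^ 2 :=
    Finset.sum_nonneg fun i _ => sq_nonneg _
  linarith

lemma maj_antisymm_of_sq {x y : Fin n → ℝ} (hx : ∀ i, 0 ≤ x i)
    (hsum : ∑ i, x i = ∑ i, y i) (hmaj : Maj x y)
    (hsq : ∑ i, (y i) ^ 2 ≤ ∑ i, (x i) ^ 2) : Maj y x := by
  have key := sq_sum_le_of_maj hx hsum hmaj
  have hzero : ∑ i ∈ Finset.range n, (extD y i - extD x i) ^ 2 = 0 := by
    have h2 : 0 ≤ ∑ i ∈ Finset.range n, (extD y i - extD x i) ^ 2 :=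
      Finset.sum_nonneg fun i _ => sq_nonneg _
    linarith
  have heq : ∀ i ∈ Finset.range n, extD y i = extD x i := by
    intro i hi
    have := (Finset.sum_eq_zero_iff_of_nonneg (fun i _ => sq_nonneg _)).mp hzero i hi
    have := sq_eq_zero_iff.mp this
    linarith
  intro k
  rw [topSum_eq_range, topSum_eq_range]
  refine le_of_eq (Finset.sum_congr rfl fun i hi => ?_)
  by_cases h : i < n
  · exact heq i (Finset.mem_range.mpr h)
  · simp [extD, h]

lemma maj_trans {x y z : Fin n → ℝ} (h1 : Maj x y) (h2 : Maj y z) : Maj x z :=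
  fun k => le_trans (h1 k) (h2 k)

end abel

section ds
variable {n : ℕ}

lemma topSum_zero (x : Fin n → ℝ) : topSum x 0 = 0 := by
  simp [topSum]

lemma maj_of_doublyStochastic {x y : Fin n → ℝ} {D : Fin n → Fin n → ℝ}
    (hD0 : ∀ i j, 0 ≤ D i j) (hcol : ∀ j, ∑ i, D i j = 1) (hrow : ∀ i, ∑ j, D i j = 1)
    (hx : ∀ i, x i = ∑ j, D i j * y j) : Maj x y := by
  intro k
  set m := min k n with hm
  have hmn : m ≤ n := min_le_right k n
  by_cases hm0 : m = 0
  · rcases Nat.min_eq_zero_iff.mp (by omega : min k n = 0) with h | h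
    · subst h; rw [topSum_zero, topSum_zero]
    · subst h; simp [topSum]
  have hm1 : 1 ≤ m := Nat.one_le_iff_ne_zero.mpr hm0
  set F : Finset (Fin n) := Finset.univ.filter (fun i : Fin n => (i : ℕ) < m) with hF
  have hFk : ∀ (z : Fin n → ℝ), topSum z k = ∑ i ∈ F, sortDesc z i := by
    intro z
    rw [topSum, hF]
    refine Finset.sum_congr ?_ (fun _ _ => rfl)
    apply Finset.filter_congr
    intro i _
    simp only [hm, lt_min_iff, eq_iff_iff]
    exact ⟨fun h => ⟨h, i.is_lt⟩, fun h => h.1⟩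
  have hcardF : F.card = m := by
    have himg : F = Finset.image (Fin.castLE hmn) Finset.univ := by
      ext i
      rw [hF, Finset.mem_filter, Finset.mem_image]
      constructor
      · rintro ⟨-, hi⟩
        exact ⟨⟨(i : ℕ), hi⟩, Finset.mem_univ _, Fin.ext rfl⟩
      · rintro ⟨a, -, rfl⟩
        exact ⟨Finset.mem_univ _, a.is_lt⟩
    rw [himg, Finset.card_image_of_injective _ (Fin.castLE_injective hmn),
      Finset.card_univ, Fintype.card_fin]
  set Sx : Finset (Fin n) := F.image (descPerm x) with hSx
  set T : Finset (Fin n) := F.image (descPerm y) with hT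
  have hcardSx : Sx.card = m := by
    rw [hSx, Finset.card_image_of_injective _ (descPerm x).injective, hcardF]
  have hcardT : T.card = m := by
    rw [hT, Finset.card_image_of_injective _ (descPerm y).injective, hcardF]
  have htsx : topSum x k = ∑ j ∈ Sx, x j := by
    rw [hFk x, hSx, Finset.sum_image (fun a _ b _ h => (descPerm x).injective h)]
    rfl
  have htsy : topSum y k = ∑ j ∈ T, y j := by
    rw [hFk y, hT, Finset.sum_image (fun a _ b _ h => (descPerm y).injective h)]
    rfl
  set t : Fin n → ℝ := fun j => ∑ i ∈ Sx, D i j with ht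
  have ht0 : ∀ j, 0 ≤ t j := fun j => Finset.sum_nonneg fun i _ => hD0 i j
  have ht1 : ∀ j, t j ≤ 1 := by
    intro j
    rw [← hcol j]
    exact Finset.sum_le_sum_of_subset_of_nonneg (Finset.subset_univ _)
      (fun i _ _ => hD0 i j)
  have htsum : ∑ j, t j = m := by
    rw [show (∑ j, t j) = ∑ i ∈ Sx, ∑ j, D i j from Finset.sum_comm]
    rw [Finset.sum_congr rfl (fun i _ => hrow i), Finset.sum_const, hcardSx]
    simp
  have hxy : ∑ j ∈ Sx, x j = ∑ j, t j * y j := by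
    rw [Finset.sum_congr rfl (fun i (_ : i ∈ Sx) => hx i)]
    rw [Finset.sum_comm]
    refine Finset.sum_congr rfl fun j _ => ?_
    rw [ht, Finset.sum_mul]
  -- threshold
  have hm1n : m - 1 < n := lt_of_lt_of_le (Nat.sub_lt hm1 one_pos) hmn
  set θ : ℝ := sortDesc y ⟨m - 1, hm1n⟩ with hθ
  have hTmem : ∀ j, j ∈ T ↔ ((descPerm y).symm j : ℕ) < m := by
    intro j
    rw [hT, hF]
    constructor
    · rintro hj
      obtain ⟨a, ha, rfl⟩ := Finset.mem_image.mp hj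
      simp only [Finset.mem_filter, Finset.mem_univ, true_and] at ha
      simpa using ha
    · intro hj
      refine Finset.mem_image.mpr ⟨(descPerm y).symm j, ?_, by simp⟩
      simp only [Finset.mem_filter, Finset.mem_univ, true_and]
      exact hj
  have hyT : ∀ j ∈ T, θ ≤ y j := by
    intro j hj
    have h1 := (hTmem j).mp hj
    have : sortDesc y ⟨m-1, hm1n⟩ ≤ sortDesc y ((descPerm y).symm j) := by
      apply sortDesc_anti
      rw [Fin.le_def]
      exact Nat.le_sub_one_of_lt h1
    calc θ ≤ sortDesc y ((descPerm y).symm j) := this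
    _ = y (descPerm y ((descPerm y).symm j)) := rfl
    _ = y j := by rw [Equiv.apply_symm_apply]
  have hyT' : ∀ j ∉ T, y j ≤ θ := by
    intro j hj
    have h1 : m ≤ ((descPerm y).symm j : ℕ) := by
      by_contra h
      exact hj ((hTmem j).mpr (Nat.lt_of_not_le h))
    have : sortDesc y ((descPerm y).symm j) ≤ sortDesc y ⟨m-1, hm1n⟩ := by
      apply sortDesc_anti
      rw [Fin.le_def]
      exact le_trans (Nat.sub_le m 1) h1
    calc y j = y (descPerm y ((descPerm y).symm j)) := by rw [Equiv.apply_symm_apply]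
    _ = sortDesc y ((descPerm y).symm j) := rfl
    _ ≤ θ := this
  set s : Fin n → ℝ := fun j => if j ∈ T then 1 else 0 with hs
  have hssum : ∑ j, s j = m := by
    rw [hs]
    simp only [Finset.sum_ite_mem, Finset.univ_inter]
    rw [Finset.sum_const, hcardT]
    simp
  have hsy : ∑ j ∈ T, y j = ∑ j, s j * y j := by
    rw [hs]
    rw [show (∑ j, (if j ∈ T then (1:ℝ) else 0) * y j) = ∑ j, if j ∈ T then y j else 0 from
      Finset.sum_congr rfl fun j _ => by by_cases h : j ∈ T <;> simp [h]]
    rw [Finset.sum_ite_mem, Finset.univ_inter]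
  have key : ∑ j, t j * y j ≤ ∑ j, s j * y j := by
    have hterm : ∀ j, 0 ≤ (s j - t j) * (y j - θ) := by
      intro j
      by_cases h : j ∈ T
      · have := hyT j h
        have hsj : s j = 1 := if_pos h
        nlinarith [ht1 j]
      · have := hyT' j h
        have hsj : s j = 0 := if_neg h
        nlinarith [ht0 j]
    have h1 : 0 ≤ ∑ j, ((s j - t j) * (y j - θ)) :=
      Finset.sum_nonneg fun j _ => hterm j
    have e1 : ∑ j, (s j - t j) * y j
        = (∑ j, (s j - t j) * (y j - θ)) + θ * (∑ j, s j) - θ * (∑ j, t j) := by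
      calc ∑ j, (s j - t j) * y j
          = ∑ j, (((s j - t j) * (y j - θ) + θ * s j) - θ * t j) :=
            Finset.sum_congr rfl fun j _ => by ring
        _ = (∑ j, ((s j - t j) * (y j - θ) + θ * s j)) - ∑ j, θ * t j :=
            Finset.sum_sub_distrib _ _
        _ = ((∑ j, (s j - t j) * (y j - θ)) + ∑ j, θ * s j) - ∑ j, θ * t j := by
            rw [Finset.sum_add_distrib]
        _ = (∑ j, (s j - t j) * (y j - θ)) + θ * (∑ j, s j) - θ * (∑ j, t j) := by
            rw [← Finset.mul_sum, ← Finset.mul_sum]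
    have e2 : ∑ j, (s j - t j) * y j = (∑ j, s j * y j) - ∑ j, t j * y j := by
      calc ∑ j, (s j - t j) * y j
          = ∑ j, (s j * y j - t j * y j) := Finset.sum_congr rfl fun j _ => by ring
        _ = (∑ j, s j * y j) - ∑ j, t j * y j := Finset.sum_sub_distrib _ _
    rw [hssum, htsum] at e1
    linarith
  rw [htsx, htsy, hxy, hsy]
  exact key

end ds

section q
variable {n : ℕ}

/-- matrix whose columns are the ψ i -/
def onbMat (ψ : Fin n → (Fin n → ℂ)) : Matrix (Fin n) (Fin n) ℂ :=
  Matrix.of (fun j i => ψ i j)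

lemma onbMat_conjT_mul (ψ : Fin n → (Fin n → ℂ)) (hψ : IsONB ψ) :
    (onbMat ψ)ᴴ * onbMat ψ = 1 := by
  ext i j
  simp only [Matrix.mul_apply, Matrix.conjTranspose_apply, onbMat, Matrix.of_apply,
    Matrix.one_apply]
  have := hψ i j
  simpa [dotProduct, mul_comm] using this

lemma onbMat_mul_conjT (ψ : Fin n → (Fin n → ℂ)) (hψ : IsONB ψ) :
    onbMat ψ * (onbMat ψ)ᴴ = 1 :=
  mul_eq_one_comm.mp (onbMat_conjT_mul ψ hψ)

lemma outcome_formula (ρ : Matrix (Fin n) (Fin n) ℂ) (hρ : ρ.PosSemidef)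
    (ψ : Fin n → (Fin n → ℂ)) (i : Fin n) :
    outcome ρ ψ i = ∑ j, Complex.normSq ((star (hρ.isHermitian.eigenvectorUnitary : Matrix (Fin n) (Fin n) ℂ) *ᵥ ψ i) j)
      * hρ.isHermitian.eigenvalues j := by
  set hA := hρ.isHermitian
  set U : Matrix (Fin n) (Fin n) ℂ := (hA.eigenvectorUnitary : Matrix (Fin n) (Fin n) ℂ)
  set lam := hA.eigenvalues
  set w : Fin n → ℂ := star U *ᵥ ψ i with hw
  have hsp : ρ = U * diagonal (RCLike.ofReal ∘ lam) * star U := hA.spectral_theorem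
  have h1 : star (ψ i) ⬝ᵥ (ρ *ᵥ ψ i)
      = star w ⬝ᵥ (diagonal (RCLike.ofReal ∘ lam) *ᵥ w) := by
    conv_lhs => rw [hsp]
    rw [← Matrix.mulVec_mulVec, ← Matrix.mulVec_mulVec]
    rw [Matrix.dotProduct_mulVec (star (ψ i)) U]
    congr 1
    rw [hw, Matrix.star_mulVec, Matrix.star_eq_conjTranspose, Matrix.conjTranspose_conjTranspose]
  rw [outcome, h1]
  rw [dotProduct]
  have h2 : ∀ j, star w j * (diagonal (RCLike.ofReal ∘ lam) *ᵥ w) j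
      = (lam j : ℂ) * Complex.normSq (w j) := by
    intro j
    rw [Matrix.mulVec_diagonal]
    have : (starRingEnd ℂ) (w j) * w j = (Complex.normSq (w j) : ℂ) := by
      rw [mul_comm, Complex.mul_conj]
    calc star w j * ((RCLike.ofReal ∘ lam) j * w j)
        = (lam j : ℂ) * ((starRingEnd ℂ) (w j) * w j) := by
          simp only [Pi.star_apply, RCLike.star_def, Function.comp_apply,
            RCLike.ofReal_alg, Complex.coe_algebraMap]
          push_cast
          ring
      _ = (lam j : ℂ) * (Complex.normSq (w j) : ℂ) := by rw [this]
  rw [Finset.sum_congr rfl fun j _ => h2 j, Complex.re_sum]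
  refine Finset.sum_congr rfl fun j _ => ?_
  rw [show ((lam j : ℂ) * (Complex.normSq (w j) : ℂ)) = ((lam j * Complex.normSq (w j) : ℝ) : ℂ) by push_cast; ring]
  rw [Complex.ofReal_re]
  ring
end q

section q2
variable {n : ℕ}

lemma sum_normSq_row {M : Matrix (Fin n) (Fin n) ℂ} (h : Mᴴ * M = 1) (i : Fin n) :
    ∑ j, Complex.normSq (M j i) = 1 := by
  have h1 : (Mᴴ * M) i i = (1 : ℂ) := by rw [h]; simp [Matrix.one_apply]
  rw [Matrix.mul_apply] at h1
  have h2 : ∀ j, (Mᴴ) i j * M j i = (Complex.normSq (M j i) : ℂ) := fun j => by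
    rw [Matrix.conjTranspose_apply, RCLike.star_def, mul_comm, Complex.mul_conj]
  rw [Finset.sum_congr rfl (fun j _ => h2 j)] at h1
  have := congrArg Complex.re h1
  rw [Complex.re_sum] at this
  simpa using this

lemma sum_normSq_col {M : Matrix (Fin n) (Fin n) ℂ} (h : M * Mᴴ = 1) (j : Fin n) :
    ∑ i, Complex.normSq (M j i) = 1 := by
  have h1 : (M * Mᴴ) j j = (1 : ℂ) := by rw [h]; simp [Matrix.one_apply]
  rw [Matrix.mul_apply] at h1
  have h2 : ∀ i, M j i * (Mᴴ) i j = (Complex.normSq (M j i) : ℂ) := fun i => by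
    rw [Matrix.conjTranspose_apply, RCLike.star_def, Complex.mul_conj]
  rw [Finset.sum_congr rfl (fun i _ => h2 i)] at h1
  have := congrArg Complex.re h1
  rw [Complex.re_sum] at this
  simpa using this

lemma outcome_maj (ρ : Matrix (Fin n) (Fin n) ℂ) (hρ : ρ.PosSemidef)
    (ψ : Fin n → (Fin n → ℂ)) (hψ : IsONB ψ) :
    Maj (outcome ρ ψ) hρ.isHermitian.eigenvalues := by
  set hA := hρ.isHermitian
  set U : Matrix (Fin n) (Fin n) ℂ := (hA.eigenvectorUnitary : Matrix (Fin n) (Fin n) ℂ) with hU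
  set M : Matrix (Fin n) (Fin n) ℂ := star U * onbMat ψ with hM
  have hMw : ∀ i j, M j i = (star U *ᵥ ψ i) j := by
    intro i j
    simp [hM, Matrix.mul_apply, onbMat, Matrix.mulVec, dotProduct]
  have hUU : U * star U = 1 := Matrix.mem_unitaryGroup_iff.mp hA.eigenvectorUnitary.2
  have hUU' : star U * U = 1 := mul_eq_one_comm.mp hUU
  have hM1 : Mᴴ * M = 1 := by
    rw [hM, Matrix.conjTranspose_mul, Matrix.star_eq_conjTranspose U,
      Matrix.conjTranspose_conjTranspose]
    calc (onbMat ψ)ᴴ * U * (Uᴴ * onbMat ψ)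
        = (onbMat ψ)ᴴ * (U * Uᴴ) * onbMat ψ := by noncomm_ring
      _ = 1 := by
          rw [← Matrix.star_eq_conjTranspose U, hUU, mul_one, onbMat_conjT_mul ψ hψ]
  have hM2 : M * Mᴴ = 1 := mul_eq_one_comm.mp hM1
  apply maj_of_doublyStochastic (D := fun i j => Complex.normSq (M j i))
  · intro i j; exact Complex.normSq_nonneg _
  · intro j; exact sum_normSq_col hM2 j
  · intro i; exact sum_normSq_row hM1 i
  · intro i
    rw [outcome_formula ρ hρ ψ i]
    exact Finset.sum_congr rfl fun j _ => by rw [hMw i j]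

lemma stdBasis_isONB : IsONB (fun i : Fin n => (Pi.single i 1 : Fin n → ℂ)) := by
  intro i j
  simp [dotProduct, Pi.single_apply, Finset.sum_ite_eq, eq_comm]

lemma diagVec_eq_outcome_std (ρ : Matrix (Fin n) (Fin n) ℂ) :
    diagVec ρ = outcome ρ (fun i : Fin n => (Pi.single i 1 : Fin n → ℂ)) := by
  funext i
  rw [diagVec, outcome]
  congr 1
  simp [dotProduct, Matrix.mulVec, Pi.single_apply]

end q2

section q3
variable {n : ℕ}

lemma trace_eq_sum_eigen (ρ : Matrix (Fin n) (Fin n) ℂ) (hA : ρ.IsHermitian) :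
    ρ.trace = ∑ i, (hA.eigenvalues i : ℂ) := by
  set U : Matrix (Fin n) (Fin n) ℂ := (hA.eigenvectorUnitary : Matrix (Fin n) (Fin n) ℂ) with hU
  have hUU' : star U * U = 1 :=
    mul_eq_one_comm.mp (Matrix.mem_unitaryGroup_iff.mp hA.eigenvectorUnitary.2)
  have hsp : ρ = U * diagonal (RCLike.ofReal ∘ hA.eigenvalues) * star U := hA.spectral_theorem
  conv_lhs => rw [hsp]
  rw [Matrix.trace_mul_cycle, hUU', one_mul, Matrix.trace_diagonal]
  rfl

lemma trace_sq_eq_sum_eigen_sq (ρ : Matrix (Fin n) (Fin n) ℂ) (hA : ρ.IsHermitian) :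
    (ρ * ρ).trace = ∑ i, ((hA.eigenvalues i : ℂ)) ^ 2 := by
  set U : Matrix (Fin n) (Fin n) ℂ := (hA.eigenvectorUnitary : Matrix (Fin n) (Fin n) ℂ) with hU
  have hUU' : star U * U = 1 :=
    mul_eq_one_comm.mp (Matrix.mem_unitaryGroup_iff.mp hA.eigenvectorUnitary.2)
  set D : Matrix (Fin n) (Fin n) ℂ := Matrix.diagonal (RCLike.ofReal ∘ hA.eigenvalues) with hD
  have hsp : ρ = U * D * star U := hA.spectral_theorem
  have : ρ * ρ = U * (D * D) * star U := by
    rw [hsp]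
    calc U * D * star U * (U * D * star U) = U * (D * (star U * U) * D) * star U := by
          noncomm_ring
      _ = U * (D * D) * star U := by rw [hUU', mul_one]
  rw [this, Matrix.trace_mul_cycle, ← Matrix.mul_assoc, hUU', one_mul]
  rw [hD, Matrix.diagonal_mul_diagonal, Matrix.trace_diagonal]
  refine Finset.sum_congr rfl fun i _ => ?_
  simp [sq]

lemma frobenius_eq (ρ : Matrix (Fin n) (Fin n) ℂ) (hA : ρ.IsHermitian) :
    ∑ i, ∑ j, Complex.normSq (ρ i j) = ∑ i, (hA.eigenvalues i) ^ 2 := by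
  have h1 : (ρ * ρ).trace = ∑ i, ∑ j, (Complex.normSq (ρ i j) : ℂ) := by
    rw [Matrix.trace]
    refine Finset.sum_congr rfl fun i _ => ?_
    rw [Matrix.diag_apply, Matrix.mul_apply]
    refine Finset.sum_congr rfl fun j _ => ?_
    have hji : ρ j i = (starRingEnd ℂ) (ρ i j) := by
      have h0 := congrFun (congrFun hA j) i
      simp only [Matrix.conjTranspose_apply, RCLike.star_def] at h0
      exact h0.symm
    rw [hji, Complex.mul_conj]
  rw [trace_sq_eq_sum_eigen_sq ρ hA] at h1
  have := congrArg Complex.re h1.symm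
  rw [Complex.re_sum, Complex.re_sum] at this
  calc ∑ i, ∑ j, Complex.normSq (ρ i j)
      = ∑ i, (∑ j, (Complex.normSq (ρ i j) : ℂ)).re := by
        refine Finset.sum_congr rfl fun i _ => ?_
        rw [Complex.re_sum]
        exact (Finset.sum_congr rfl fun j _ => (Complex.ofReal_re _).symm)
    _ = ∑ i, ((hA.eigenvalues i : ℂ) ^ 2).re := this
    _ = ∑ i, (hA.eigenvalues i) ^ 2 := by
        refine Finset.sum_congr rfl fun i _ => ?_
        rw [show ((hA.eigenvalues i : ℂ)) ^ 2 = ((hA.eigenvalues i ^ 2 : ℝ) : ℂ) by push_cast; ring]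
        exact Complex.ofReal_re _

lemma diag_re_nonneg (ρ : Matrix (Fin n) (Fin n) ℂ) (hρ : ρ.PosSemidef) (i : Fin n) :
    0 ≤ (ρ i i).re := by
  have h := hρ.dotProduct_mulVec_nonneg (Pi.single i 1)
  have he : dotProduct (star (Pi.single i 1 : Fin n → ℂ)) (ρ *ᵥ Pi.single i 1) = ρ i i := by
    simp [dotProduct, Matrix.mulVec, Pi.single_apply]
  rw [he] at h
  exact (Complex.le_def.mp h).1

lemma diag_im_zero (ρ : Matrix (Fin n) (Fin n) ℂ) (hA : ρ.IsHermitian) (i : Fin n) :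
    (ρ i i).im = 0 := by
  have := congrFun (congrFun hA i) i
  simp only [Matrix.conjTranspose_apply] at this
  have h2 := congrArg Complex.im this
  simp only [Complex.conj_im, RCLike.star_def] at h2
  linarith

lemma sum_diagVec (ρ : Matrix (Fin n) (Fin n) ℂ) (htr : ρ.trace = 1) :
    ∑ i, diagVec ρ i = 1 := by
  have := congrArg Complex.re htr
  rw [Matrix.trace, Complex.re_sum] at this
  simpa [diagVec, Matrix.diag_apply] using this

lemma sum_eigen (ρ : Matrix (Fin n) (Fin n) ℂ) (hA : ρ.IsHermitian) (htr : ρ.trace = 1) :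
    ∑ i, hA.eigenvalues i = 1 := by
  have h := trace_eq_sum_eigen ρ hA
  rw [htr] at h
  have := congrArg Complex.re h
  rw [Complex.re_sum] at this
  simpa using this.symm

end q3


/-- The `l₂` norm of coherence `C_{l₂}(ρ) = ∑_{i≠j} |ρ_{ij}|²`. -/
noncomputable def Cl2 {n : ℕ} (ρ : Matrix (Fin n) (Fin n) ℂ) : ℝ :=
  ∑ i, ∑ j, if i ≠ j then ‖ρ i j‖ ^ 2 else 0

/-- The linear (Tsallis-2) entropy `S_L(p) = 1 - ∑ᵢ pᵢ²`. -/
def linEnt {ι : Type*} [Fintype ι] (p : ι → ℝ) : ℝ := 1 - ∑ i, (p i) ^ 2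

/-- `C_{l₂}(ρ) = S_L(d) − S_L(λ)`; moreover for any measurement outcome
distribution `p`, `C_{l₂}(ρ) ≥ S_L(d) − S_L(d∨p)`, strictly positive when `p ⊀ d`. -/
theorem stmt13 {n : ℕ} (ρ : Matrix (Fin n) (Fin n) ℂ)
    (hρ : ρ.PosSemidef) (htr : ρ.trace = 1)
    (ψ : Fin n → (Fin n → ℂ)) (hψ : IsONB ψ)
    (c : Fin n → ℝ) (hc : IsMajJoin (diagVec ρ) (outcome ρ ψ) c) :
    Cl2 ρ = linEnt (diagVec ρ) - linEnt hρ.isHermitian.eigenvalues ∧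
    linEnt (diagVec ρ) - linEnt c ≤ Cl2 ρ ∧
    (¬ Maj (outcome ρ ψ) (diagVec ρ) → 0 < linEnt (diagVec ρ) - linEnt c) := by
  obtain ⟨hcP, hcd, hcp, hmin⟩ := hc
  set lam := hρ.isHermitian.eigenvalues with hlam
  have hdsum : ∑ i, diagVec ρ i = 1 := sum_diagVec ρ htr
  have hlsum : ∑ i, lam i = 1 := sum_eigen ρ hρ.isHermitian htr
  have hlnn : ∀ i, 0 ≤ lam i := fun i => hρ.eigenvalues_nonneg i
  have hmajd : Maj (diagVec ρ) lam := by
    rw [diagVec_eq_outcome_std ρ]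
    exact outcome_maj ρ hρ _ stdBasis_isONB
  have hmajp : Maj (outcome ρ ψ) lam := outcome_maj ρ hρ ψ hψ
  have hclam : Maj c lam := hmin lam ⟨hlnn, hlsum⟩ hmajd hmajp
  have hfro : ∑ i, ∑ j, Complex.normSq (ρ i j) = ∑ i, lam i ^ 2 :=
    frobenius_eq ρ hρ.isHermitian
  have hdiag_sq : ∀ i, Complex.normSq (ρ i i) = (diagVec ρ i) ^ 2 := by
    intro i
    rw [Complex.normSq_apply, diag_im_zero ρ hρ.isHermitian i, diagVec]
    ring
  have hrows : ∀ i, (∑ j, if i ≠ j then ‖ρ i j‖ ^ 2 else 0)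
      = (∑ j, Complex.normSq (ρ i j)) - (diagVec ρ i) ^ 2 := by
    intro i
    calc (∑ j, if i ≠ j then ‖ρ i j‖ ^ 2 else 0)
        = ∑ j, (Complex.normSq (ρ i j) - if i = j then Complex.normSq (ρ i j) else 0) := by
          refine Finset.sum_congr rfl fun j _ => ?_
          by_cases h : i = j <;> simp [h, Complex.sq_norm]
      _ = (∑ j, Complex.normSq (ρ i j))
            - ∑ j, (if i = j then Complex.normSq (ρ i j) else 0) := Finset.sum_sub_distrib _ _
      _ = (∑ j, Complex.normSq (ρ i j)) - (diagVec ρ i) ^ 2 := by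
          rw [Finset.sum_ite_eq Finset.univ i (fun j => Complex.normSq (ρ i j))]
          rw [if_pos (Finset.mem_univ i), hdiag_sq i]
  have h1 : Cl2 ρ = linEnt (diagVec ρ) - linEnt lam := by
    rw [Cl2, linEnt, linEnt]
    rw [Finset.sum_congr rfl fun i (_ : i ∈ Finset.univ) => hrows i,
      Finset.sum_sub_distrib, hfro]
    ring
  have hc2 : ∑ i, c i ^ 2 ≤ ∑ i, lam i ^ 2 :=
    sq_sum_le_of_maj' hcP.1 (by rw [hcP.2, hlsum]) hclam
  have h2 : linEnt (diagVec ρ) - linEnt c ≤ Cl2 ρ := by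
    rw [h1]
    simp only [linEnt]
    linarith
  refine ⟨h1, h2, ?_⟩
  intro hnot
  by_contra hle
  push_neg at hle
  have hdc2 : ∑ i, c i ^ 2 ≤ ∑ i, (diagVec ρ i) ^ 2 := by
    simp only [linEnt] at hle
    linarith
  have hmajcd : Maj c (diagVec ρ) :=
    maj_antisymm_of_sq (fun i => diag_re_nonneg ρ hρ i)
      (by rw [hdsum, hcP.2]) hcd hdc2
  exact hnot (maj_trans hcp hmajcd)
end

section
/- Let ρ be an n×n density matrix whose diagonal entries d_i are all strictly positive. Then the robustness of coherence satisfies C_R(ρ) ≥ Σ_{i≠j} |ρ_{ij}|² / √(d_i d_j). -/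
open Matrix Finset ComplexOrder

/-- The robustness of coherence
`C_R(ρ) = min { r − 1 : r ≥ 1, ρ ≤ rδ for some incoherent state δ }`. -/
noncomputable def CRob {n : ℕ} (ρ : Matrix (Fin n) (Fin n) ℂ) : ℝ :=
  sInf {x : ℝ | ∃ r : ℝ, 1 ≤ r ∧
    (∃ δ : Matrix (Fin n) (Fin n) ℂ, δ.PosSemidef ∧ δ.trace = 1 ∧ δ.IsDiag ∧
      ((r : ℂ) • δ - ρ).PosSemidef) ∧ x = r - 1}

lemma psd_diag_nonneg {m : Type*} [Fintype m] [DecidableEq m]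
    {M : Matrix m m ℂ} (hM : M.PosSemidef) (i : m) : 0 ≤ M i i := by
  have h := hM.dotProduct_mulVec_nonneg (Pi.single i 1)
  simpa [dotProduct, mulVec, Pi.single_apply, mul_ite, ite_mul] using h

lemma psd_trace_re_nonneg {m : Type*} [Fintype m] [DecidableEq m]
    {M : Matrix m m ℂ} (hM : M.PosSemidef) : 0 ≤ M.trace.re := by
  have h : (0:ℂ) ≤ M.trace := Finset.sum_nonneg fun i _ => psd_diag_nonneg hM i
  exact (Complex.le_def.mp h).1

lemma psd_eq_conjTranspose_mul_self {m : Type*} [Fintype m] [DecidableEq m]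
    {M : Matrix m m ℂ} (hM : M.PosSemidef) : ∃ B : Matrix m m ℂ, M = Bᴴ * B := by
  open scoped MatrixOrder in
  obtain ⟨B, hB⟩ := CStarAlgebra.nonneg_iff_eq_star_mul_self.mp hM.nonneg
  exact ⟨B, hB⟩

lemma trace_mul_psd_re_nonneg {m : Type*} [Fintype m] [DecidableEq m]
    {P Q : Matrix m m ℂ} (hP : P.PosSemidef) (hQ : Q.PosSemidef) :
    0 ≤ ((P * Q).trace).re := by
  obtain ⟨B, rfl⟩ := psd_eq_conjTranspose_mul_self hP
  rw [Matrix.mul_assoc, Matrix.trace_mul_comm]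
  exact psd_trace_re_nonneg (hQ.mul_mul_conjTranspose_same B)

lemma psd_entry_sq_le {m : Type*} [Fintype m] [DecidableEq m]
    {M : Matrix m m ℂ} (hM : M.PosSemidef) (i j : m) :
    ‖M i j‖ ^ 2 ≤ (M i i).re * (M j j).re := by
  obtain ⟨B, rfl⟩ := psd_eq_conjTranspose_mul_self hM
  let col : m → EuclideanSpace ℂ m := fun a => (WithLp.equiv 2 (m → ℂ)).symm (fun k => B k a)
  have hent : ∀ a b : m, (Bᴴ * B) a b = (inner (𝕜 := ℂ) (col a) (col b)) := by
    intro a b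
    simp [col, Matrix.mul_apply, PiLp.inner_apply, RCLike.inner_apply, conjTranspose_apply,
      mul_comm]
  have hnorm : ∀ a : m, ((Bᴴ * B) a a).re = ‖col a‖ ^ 2 := by
    intro a
    rw [hent a a, ← inner_self_eq_norm_sq (𝕜 := ℂ) (E := EuclideanSpace ℂ m),
      ← RCLike.re_to_complex]
  have h1 : ‖(Bᴴ * B) i j‖ ≤ ‖col i‖ * ‖col j‖ := by
    rw [hent i j]
    exact norm_inner_le_norm _ _
  calc ‖(Bᴴ * B) i j‖ ^ 2
      ≤ (‖col i‖ * ‖col j‖) ^ 2 := pow_le_pow_left₀ (norm_nonneg _) h1 2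
    _ = ((Bᴴ * B) i i).re * ((Bᴴ * B) j j).re := by rw [hnorm i, hnorm j]; ring

/-- quadform is self-adjoint for hermitian matrices -/
lemma herm_quad_star {m : Type*} [Fintype m] {M : Matrix m m ℂ} (hM : M.IsHermitian)
    (x : m → ℂ) : star (star x ⬝ᵥ M *ᵥ x) = star x ⬝ᵥ M *ᵥ x := by
  conv_lhs => rw [star_dotProduct, star_star, star_mulVec, ← dotProduct_mulVec, hM.eq]

/-- The nonemptiness witness: `n • diag(ρ) ≥ ρ`. -/
lemma crob_nonempty {n : ℕ} (hn : 0 < n) (ρ : Matrix (Fin n) (Fin n) ℂ)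
    (hρ : ρ.PosSemidef) (htr : ρ.trace = 1) :
    ∃ x, x ∈ {x : ℝ | ∃ r : ℝ, 1 ≤ r ∧
      (∃ δ : Matrix (Fin n) (Fin n) ℂ, δ.PosSemidef ∧ δ.trace = 1 ∧ δ.IsDiag ∧
        ((r : ℂ) • δ - ρ).PosSemidef) ∧ x = r - 1} := by
  refine ⟨(n : ℝ) - 1, (n : ℝ), by exact_mod_cast hn,
    ⟨Matrix.diagonal (fun i => ρ i i), ?_, ?_, Matrix.isDiag_diagonal _, ?_⟩, rfl⟩
  · exact Matrix.PosSemidef.diagonal fun i => psd_diag_nonneg hρ i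
  · rwa [Matrix.trace_diagonal]
  · -- PSD of n•δ - ρ
    set d : Fin n → ℝ := fun i => (ρ i i).re with hdd
    have hd0 : ∀ i, 0 ≤ d i := fun i => (Complex.le_def.mp (psd_diag_nonneg hρ i)).1
    have hcoe : ∀ i, ρ i i = (d i : ℂ) := fun i => (hρ.1.coe_re_apply_self i).symm
    have hδh : (Matrix.diagonal fun i => ρ i i).IsHermitian :=
      (Matrix.PosSemidef.diagonal fun i => psd_diag_nonneg hρ i).1
    have hherm : ((((n:ℝ)) : ℂ) • Matrix.diagonal (fun i => ρ i i) - ρ).IsHermitian := by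
      refine Matrix.IsHermitian.sub ?_ hρ.1
      show _ᴴ = _
      rw [Matrix.conjTranspose_smul, hδh.eq, Complex.star_def, Complex.conj_ofReal]
    refine Matrix.PosSemidef.of_dotProduct_mulVec_nonneg hherm fun x => ?_
    have hstar := herm_quad_star hherm x
    rw [Complex.le_def]
    refine ⟨?_, ?_⟩; swap
    · simpa using (Complex.conj_eq_iff_im.mp hstar).symm
    -- real part
    have hb : ∀ i j, ‖ρ i j‖ ≤ Real.sqrt (d i) * Real.sqrt (d j) := by
      intro i j
      rw [← Real.sqrt_mul (hd0 i)]
      rw [show ‖ρ i j‖ = Real.sqrt (‖ρ i j‖ ^ 2) by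
        rw [Real.sqrt_sq (norm_nonneg _)]]
      exact Real.sqrt_le_sqrt (psd_entry_sq_le hρ i j)
    have hq : (star x ⬝ᵥ ρ *ᵥ x).re ≤ (n:ℝ) * ∑ i, d i * Complex.normSq (x i) := by
      have h1 : ‖star x ⬝ᵥ ρ *ᵥ x‖
          ≤ ∑ i, ∑ j, ‖x i‖ * Real.sqrt (d i)
              * (‖x j‖ * Real.sqrt (d j)) := by
        have h2 : ‖star x ⬝ᵥ ρ *ᵥ x‖
            ≤ ∑ i, ∑ j, ‖x i‖ * ‖ρ i j‖ * ‖x j‖ := by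
          rw [dotProduct]
          refine (norm_sum_le _ _).trans (Finset.sum_le_sum fun i _ => ?_)
          rw [mulVec, dotProduct, Finset.mul_sum]
          refine (norm_sum_le _ _).trans (Finset.sum_le_sum fun j _ => ?_)
          simp only [Pi.star_apply, _root_.map_mul, Complex.star_def, Complex.norm_conj]
          ring_nf
          exact le_of_eq (by rw [norm_mul, norm_mul, Complex.norm_conj])
        refine h2.trans (Finset.sum_le_sum fun i _ => Finset.sum_le_sum fun j _ => ?_)
        have := mul_le_mul_of_nonneg_left (hb i j) (norm_nonneg (x i))
        have := mul_le_mul_of_nonneg_right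
          (mul_le_mul_of_nonneg_left (hb i j) (norm_nonneg (x i)))
          (norm_nonneg (x j))
        calc ‖x i‖ * ‖ρ i j‖ * ‖x j‖
            ≤ ‖x i‖ * (Real.sqrt (d i) * Real.sqrt (d j)) * ‖x j‖ :=
              this
          _ = ‖x i‖ * Real.sqrt (d i) * (‖x j‖ * Real.sqrt (d j)) := by
              ring
      have h3 : ∑ i, ∑ j, ‖x i‖ * Real.sqrt (d i)
              * (‖x j‖ * Real.sqrt (d j))
          = (∑ i, ‖x i‖ * Real.sqrt (d i)) ^ 2 := by
        rw [sq, Finset.sum_mul_sum]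
      have h4 : (∑ i, ‖x i‖ * Real.sqrt (d i)) ^ 2
          ≤ (n:ℝ) * ∑ i, (‖x i‖ * Real.sqrt (d i)) ^ 2 := by
        have := sq_sum_le_card_mul_sum_sq (s := (Finset.univ : Finset (Fin n)))
          (f := fun i => ‖x i‖ * Real.sqrt (d i))
        simpa using this
      have h5 : ∑ i, (‖x i‖ * Real.sqrt (d i)) ^ 2
          = ∑ i, d i * Complex.normSq (x i) := by
        refine Finset.sum_congr rfl fun i _ => ?_
        rw [mul_pow, Real.sq_sqrt (hd0 i), Complex.sq_norm]
        ring
      calc (star x ⬝ᵥ ρ *ᵥ x).re ≤ ‖star x ⬝ᵥ ρ *ᵥ x‖ := Complex.re_le_norm _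
        _ ≤ _ := h1
        _ = _ := h3
        _ ≤ (n:ℝ) * ∑ i, (‖x i‖ * Real.sqrt (d i)) ^ 2 := h4
        _ = (n:ℝ) * ∑ i, d i * Complex.normSq (x i) := by rw [h5]
    have hδx : star x ⬝ᵥ (Matrix.diagonal fun i => ρ i i) *ᵥ x
        = ((∑ i, d i * Complex.normSq (x i) : ℝ) : ℂ) := by
      have hterm : ∀ i, star x i * ((Matrix.diagonal fun i => ρ i i) *ᵥ x) i
          = ((d i * Complex.normSq (x i) : ℝ) : ℂ) := by
        intro i
        rw [Matrix.mulVec_diagonal, hcoe i, Pi.star_apply, Complex.star_def]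
        push_cast [Complex.normSq_eq_conj_mul_self]
        ring
      rw [dotProduct]
      simp_rw [hterm]
      rw [← Complex.ofReal_sum]
    rw [Matrix.sub_mulVec, dotProduct_sub, Matrix.smul_mulVec, dotProduct_smul,
      smul_eq_mul, hδx]
    simp only [Complex.sub_re, Complex.zero_re, Complex.mul_re, Complex.ofReal_re,
      Complex.ofReal_im, Complex.natCast_re, Complex.natCast_im]
    have : ((n:ℂ).re * (((∑ i, d i * Complex.normSq (x i) : ℝ) : ℂ)).re
        - (n:ℂ).im * (((∑ i, d i * Complex.normSq (x i) : ℝ) : ℂ)).im)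
        = (n:ℝ) * ∑ i, d i * Complex.normSq (x i) := by
      simp
    linarith [hq, this]

/-- For a density matrix with strictly positive diagonal entries,
`C_R(ρ) ≥ ∑_{i≠j} |ρ_{ij}|² / √(dᵢ dⱼ)`. -/
theorem stmt16 {n : ℕ} (ρ : Matrix (Fin n) (Fin n) ℂ)
    (hρ : ρ.PosSemidef) (htr : ρ.trace = 1)
    (hd : ∀ i, 0 < (ρ i i).re) :
    (∑ i, ∑ j, if i ≠ j then
        ‖ρ i j‖ ^ 2 / Real.sqrt ((ρ i i).re * (ρ j j).re) else 0)
      ≤ CRob ρ := by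
  rcases Nat.eq_zero_or_pos n with hn | hn
  · subst hn
    simp [Matrix.trace] at htr
  set d : Fin n → ℝ := fun i => (ρ i i).re with hdd
  have hd0 : ∀ i, 0 ≤ d i := fun i => (hd i).le
  have hcoe : ∀ i, ρ i i = (d i : ℂ) := fun i => (hρ.1.coe_re_apply_self i).symm
  have hs0 : ∀ i, 0 < Real.sqrt (d i) := fun i => Real.sqrt_pos.mpr (hd i)
  set Dm : Matrix (Fin n) (Fin n) ℂ :=
    Matrix.diagonal (fun i => ((Real.sqrt (d i))⁻¹ : ℂ)) with hDm
  have hDmH : Dmᴴ = Dm := by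
    rw [hDm, Matrix.diagonal_conjTranspose]
    refine congrArg _ (funext fun i => ?_)
    show star ((((Real.sqrt (d i)) : ℝ) : ℂ))⁻¹ = _
    rw [star_inv₀, Complex.star_def, Complex.conj_ofReal]
  set A := Dm * ρ * Dm with hA
  have hApsd : A.PosSemidef := by
    have h := hρ.mul_mul_conjTranspose_same Dm
    rwa [hDmH] at h
  have hAentry : ∀ i j, A i j
      = ((Real.sqrt (d i))⁻¹ : ℂ) * ρ i j * ((Real.sqrt (d j))⁻¹ : ℂ) := by
    intro i j
    rw [hA, hDm, Matrix.mul_diagonal, Matrix.diagonal_mul]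
  have hAdiag : ∀ i, A i i = 1 := by
    intro i
    rw [hAentry, hcoe i]
    have hds : Real.sqrt (d i) * Real.sqrt (d i) = d i := Real.mul_self_sqrt (hd0 i)
    rw [show ((Real.sqrt (d i):ℂ))⁻¹ * (d i : ℂ) * ((Real.sqrt (d i):ℂ))⁻¹
        = ((( (Real.sqrt (d i))⁻¹ * d i * (Real.sqrt (d i))⁻¹ : ℝ)) : ℂ) by push_cast; ring]
    rw [show (Real.sqrt (d i))⁻¹ * d i * (Real.sqrt (d i))⁻¹ = (1:ℝ) by
      rw [← hds]; field_simp; rw [Real.sqrt_sq (hs0 i).le]; exact div_self (pow_pos (hs0 i) 2).ne']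
    norm_num
  apply le_csInf (crob_nonempty hn ρ hρ htr)
  rintro b ⟨r, hr, ⟨δ, hδpsd, hδtr, hδdiag, hsub⟩, rfl⟩
  have h0 : 0 ≤ ((((r:ℂ) • δ - ρ) * A).trace).re := trace_mul_psd_re_nonneg hsub hApsd
  have htrδA : (δ * A).trace = 1 := by
    have hterm : ∀ i, (δ * A) i i = δ i i := by
      intro i
      rw [Matrix.mul_apply]
      rw [Finset.sum_eq_single i]
      · rw [hAdiag i, mul_one]
      · intro k _ hk
        rw [hδdiag (Ne.symm hk), zero_mul]
      · intro h; exact absurd (Finset.mem_univ i) h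
    rw [Matrix.trace]
    calc ∑ i, (δ * A).diag i = ∑ i, δ i i := Finset.sum_congr rfl fun i _ => hterm i
      _ = δ.trace := rfl
      _ = 1 := hδtr
  have htrρA : ((ρ * A).trace).re
      = ∑ i, ∑ j, Complex.normSq (ρ i j) * ((Real.sqrt (d i))⁻¹ * (Real.sqrt (d j))⁻¹) := by
    rw [Matrix.trace, Complex.re_sum]
    refine Finset.sum_congr rfl fun i _ => ?_
    rw [Matrix.diag, Matrix.mul_apply, Complex.re_sum]
    refine Finset.sum_congr rfl fun j _ => ?_
    rw [hAentry j i]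
    have hji : ρ j i = (starRingEnd ℂ) (ρ i j) := (hρ.1.apply j i).symm
    rw [hji]
    rw [show ρ i j * (((Real.sqrt (d j):ℂ))⁻¹ * (starRingEnd ℂ) (ρ i j) * ((Real.sqrt (d i):ℂ))⁻¹)
        = (ρ i j * (starRingEnd ℂ) (ρ i j)) * (((Real.sqrt (d i):ℂ))⁻¹ * ((Real.sqrt (d j):ℂ))⁻¹)
        by ring]
    rw [Complex.mul_conj]
    rw [show ((Complex.normSq (ρ i j) : ℂ)) * (((Real.sqrt (d i):ℂ))⁻¹ * ((Real.sqrt (d j):ℂ))⁻¹)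
        = ((Complex.normSq (ρ i j) * ((Real.sqrt (d i))⁻¹ * (Real.sqrt (d j))⁻¹) : ℝ) : ℂ) by
      push_cast; ring]
    rw [Complex.ofReal_re]
  have hkey : ((ρ * A).trace).re ≤ r := by
    have hexp : (((r:ℂ) • δ - ρ) * A) = (r:ℂ) • (δ * A) - ρ * A := by
      rw [Matrix.sub_mul, Matrix.smul_mul]
    rw [hexp, Matrix.trace_sub, Matrix.trace_smul, htrδA, smul_eq_mul, mul_one] at h0
    rw [Complex.sub_re, Complex.ofReal_re] at h0
    linarith
  set F : Fin n → Fin n → ℝ :=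
    fun i j => Complex.normSq (ρ i j) * ((Real.sqrt (d i))⁻¹ * (Real.sqrt (d j))⁻¹) with hF
  have hdiagF : ∀ i, F i i = d i := by
    intro i
    simp only [hF]
    rw [hcoe i, Complex.normSq_ofReal]
    have hds : Real.sqrt (d i) * Real.sqrt (d i) = d i := Real.mul_self_sqrt (hd0 i)
    rw [← hds]
    field_simp
    rw [Real.sqrt_sq (hs0 i).le]
    field_simp
  have hsum_d : ∑ i, d i = 1 := by
    have h := congrArg Complex.re htr
    rw [Matrix.trace, Complex.re_sum] at h
    simpa using h
  have hterm_eq : ∀ i j, (if i ≠ j then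
        ‖ρ i j‖ ^ 2 / Real.sqrt ((ρ i i).re * (ρ j j).re) else 0)
      = (if i ≠ j then F i j else 0) := by
    intro i j
    by_cases h : i = j
    · simp [h]
    · simp only [h, if_true, ne_eq, not_false_iff]
      simp only [hF]
      rw [Complex.sq_norm, Real.sqrt_mul (hd0 i), div_eq_mul_inv, mul_inv]
  have hsplit : ∀ i, ∑ j, (if i ≠ j then F i j else 0) = (∑ j, F i j) - F i i := by
    intro i
    have h : ∀ j, (if i ≠ j then F i j else 0) = F i j - (if i = j then F i j else 0) := by
      intro j; by_cases h : i = j <;> simp [h]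
    simp_rw [h]
    rw [Finset.sum_sub_distrib, Finset.sum_ite_eq]
    simp
  calc (∑ i, ∑ j, if i ≠ j then
        ‖ρ i j‖ ^ 2 / Real.sqrt ((ρ i i).re * (ρ j j).re) else 0)
      = ∑ i, ∑ j, (if i ≠ j then F i j else 0) := by
        refine Finset.sum_congr rfl fun i _ => Finset.sum_congr rfl fun j _ => hterm_eq i j
    _ = ∑ i, ((∑ j, F i j) - F i i) := Finset.sum_congr rfl fun i _ => hsplit i
    _ = (∑ i, ∑ j, F i j) - ∑ i, d i := by
        rw [Finset.sum_sub_distrib]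
        congr 1
        exact Finset.sum_congr rfl fun i _ => hdiagF i
    _ = ((ρ * A).trace).re - 1 := by rw [htrρA, hsum_d]
    _ ≤ r - 1 := by linarith
end

section
/- Let ρ be an n×n density matrix whose diagonal entries d_i are all strictly positive, let ρ_d be the diagonal matrix with entries d_i, and define C_{R,Δ}(ρ) = min{ r − 1 : ρ ≤ r ρ_d }. Then C_{R,Δ}(ρ) ≥ (1/n) Σ_{i≠j} |ρ_{ij}|² / (d_i d_j), and consequently C_{max,Δ}(ρ) = log₂(1 + C_{R,Δ}(ρ)) ≥ log₂(1 + (1/n) Σ_{i≠j} |ρ_{ij}|² / (d_i d_j)). -/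
open Matrix Finset ComplexOrder

/-- `C_{R,Δ}(ρ) = min { r − 1 : ρ ≤ r ρ_d }`, where `ρ_d` is the diagonal part of `ρ`. -/
noncomputable def CRobDelta {n : ℕ} (ρ : Matrix (Fin n) (Fin n) ℂ) : ℝ :=
  sInf {x : ℝ | ∃ r : ℝ,
    ((r : ℂ) • Matrix.diagonal (fun i => ρ i i) - ρ).PosSemidef ∧ x = r - 1}

lemma psd_diag_re_nonneg {n : ℕ} {A : Matrix (Fin n) (Fin n) ℂ} (hA : A.PosSemidef)
    (i : Fin n) : 0 ≤ (A i i).re := by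
  have h := hA.dotProduct_mulVec_nonneg (Pi.single i 1)
  have he : star (Pi.single i 1 : Fin n → ℂ) ⬝ᵥ A *ᵥ Pi.single i 1 = A i i := by
    simp [dotProduct, mulVec, Pi.single_apply, ite_mul, mul_ite, Finset.sum_ite_eq']
  rw [he, Complex.le_def] at h
  exact h.1

open scoped MatrixOrder Matrix.Norms.L2Operator in
lemma psd_exists_conjTranspose_mul_self {n : ℕ} {A : Matrix (Fin n) (Fin n) ℂ}
    (hA : A.PosSemidef) : ∃ B : Matrix (Fin n) (Fin n) ℂ, A = Bᴴ * B := by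
  obtain ⟨B, hB⟩ := CStarAlgebra.nonneg_iff_eq_star_mul_self.mp hA.nonneg
  exact ⟨B, hB⟩

lemma trace_mul_re_nonneg {n : ℕ} {A B : Matrix (Fin n) (Fin n) ℂ}
    (hA : A.PosSemidef) (hB : B.PosSemidef) : 0 ≤ ((A * B).trace).re := by
  obtain ⟨C, hCe⟩ := psd_exists_conjTranspose_mul_self hA
  have hC : (C * B * Cᴴ).PosSemidef := hB.mul_mul_conjTranspose_same C
  have htr : (A * B).trace = (C * B * Cᴴ).trace := by
    rw [hCe, Matrix.mul_assoc, trace_mul_comm]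
  rw [htr, Matrix.trace]
  simp only [Matrix.diag]
  rw [Complex.re_sum]
  exact Finset.sum_nonneg fun i _ => psd_diag_re_nonneg hC i

lemma posSemidef_of_re {n : ℕ} {M : Matrix (Fin n) (Fin n) ℂ} (hH : M.IsHermitian)
    (h : ∀ x : Fin n → ℂ, 0 ≤ (star x ⬝ᵥ M *ᵥ x).re) : M.PosSemidef := by
  refine Matrix.PosSemidef.of_dotProduct_mulVec_nonneg hH fun x => ?_
  have him : (starRingEnd ℂ) (star x ⬝ᵥ M *ᵥ x) = star x ⬝ᵥ M *ᵥ x := by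
    have h1 : star (star x ⬝ᵥ M *ᵥ x) = star (M *ᵥ x) ⬝ᵥ x := by
      rw [star_dotProduct]; simp
    rw [show ((starRingEnd ℂ) (star x ⬝ᵥ M *ᵥ x)) = star (star x ⬝ᵥ M *ᵥ x) from rfl, h1,
      star_mulVec, dotProduct_mulVec, hH.eq, ← dotProduct_mulVec]
  rw [Complex.le_def]
  refine ⟨by simpa using h x, ?_⟩
  have := Complex.conj_eq_iff_im.mp him
  simpa using this.symm

lemma key_bound {n : ℕ} (ρ : Matrix (Fin n) (Fin n) ℂ)
    (hρ : ρ.PosSemidef) (hd : ∀ i, 0 < (ρ i i).re) (r : ℝ)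
    (hM : (((r : ℂ) • Matrix.diagonal (fun i => ρ i i) - ρ)).PosSemidef) :
    (∑ i, ∑ j, if i ≠ j then
        ‖ρ i j‖ ^ 2 / ((ρ i i).re * (ρ j j).re) else 0) ≤ (n : ℝ) * (r - 1) := by
  set d : Fin n → ℝ := fun i => (ρ i i).re with hdd
  have hρd : ∀ i, ρ i i = ((d i : ℝ) : ℂ) := by
    intro i
    have h := congrFun (congrFun hρ.1 i) i
    rw [Matrix.conjTranspose_apply] at h
    have him : (ρ i i).im = 0 := by
      have := congrArg Complex.im h
      simp at this; linarith
    exact Complex.ext rfl him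
  have hdne : ∀ i, ((d i : ℝ) : ℂ) ≠ 0 := fun i =>
    Complex.ofReal_ne_zero.mpr (ne_of_gt (hd i))
  set D : Matrix (Fin n) (Fin n) ℂ := Matrix.diagonal (fun i => ρ i i) with hD
  set Q : Matrix (Fin n) (Fin n) ℂ := Matrix.diagonal (fun i => (((d i)⁻¹ : ℝ) : ℂ)) with hQ
  have hQH : Qᴴ = Q := by
    ext i j
    simp only [hQ, Matrix.conjTranspose_apply, Matrix.diagonal_apply, apply_ite (starRingEnd ℂ),
      map_zero, Complex.conj_ofReal]
    by_cases h : i = j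
    · subst h; simp
    · rw [if_neg (fun hh => h hh.symm), if_neg h, star_zero]
  have hP : (Q * ρ * Q).PosSemidef := by
    have := hρ.conjTranspose_mul_mul_same Q
    rwa [hQH] at this
  have hE : ∀ i j, (Q * ρ * Q) i j = (((d i)⁻¹ : ℝ) : ℂ) * ρ i j * (((d j)⁻¹ : ℝ) : ℂ) := by
    intro i j
    simp [hQ, Matrix.mul_diagonal, Matrix.diagonal_mul]
  have h0 := trace_mul_re_nonneg hP hM
  have htrD : ((Q * ρ * Q) * D).trace = (n : ℂ) := by
    have h1 : ∀ i, ((Q * ρ * Q) * D) i i = 1 := by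
      intro i
      rw [hD, Matrix.mul_diagonal, hE, hρd i]
      field_simp
      have := hdne i
      push_cast
      field_simp
    simp [Matrix.trace, Matrix.diag, h1]
  have htrρ : ((Q * ρ * Q) * ρ).trace =
      ((∑ i, ∑ j, Complex.normSq (ρ i j) / (d i * d j) : ℝ) : ℂ) := by
    rw [Matrix.trace]
    push_cast
    apply Finset.sum_congr rfl
    intro i _
    simp only [Matrix.diag, Matrix.mul_apply, hE]
    push_cast
    apply Finset.sum_congr rfl
    intro j _
    have hji : ρ j i = (starRingEnd ℂ) (ρ i j) := by
      have := congrFun (congrFun hρ.1 j) i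
      rw [Matrix.conjTranspose_apply] at this
      exact this.symm
    rw [hji, div_eq_mul_inv]
    push_cast
    rw [mul_inv]
    linear_combination (((d i : ℝ) : ℂ))⁻¹ * (((d j : ℝ) : ℂ))⁻¹ * Complex.mul_conj (ρ i j)
  have htr : (((Q * ρ * Q) * ((r : ℂ) • D - ρ)).trace).re
      = r * n - ∑ i, ∑ j, Complex.normSq (ρ i j) / (d i * d j) := by
    have hc : ((Q * ρ * Q) * ((r : ℂ) • D - ρ)).trace
        = ((r * n - ∑ i, ∑ j, Complex.normSq (ρ i j) / (d i * d j) : ℝ) : ℂ) := by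
      rw [Matrix.mul_sub, Matrix.trace_sub, Matrix.mul_smul, Matrix.trace_smul, htrD, htrρ,
        smul_eq_mul]
      push_cast
      ring
    rw [hc, Complex.ofReal_re]
  rw [htr] at h0
  -- split the double sum
  have hsplit : (∑ i, ∑ j, Complex.normSq (ρ i j) / (d i * d j))
      = (n : ℝ) + ∑ i, ∑ j, (if i ≠ j then ‖ρ i j‖ ^ 2 / (d i * d j) else 0) := by
    have h1 : ∀ i j : Fin n, Complex.normSq (ρ i j) / (d i * d j)
        = (if i = j then 1 else 0) + (if i ≠ j then ‖ρ i j‖ ^ 2 / (d i * d j) else 0) := by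
      intro i j
      by_cases h : i = j
      · subst h
        simp only [if_pos rfl, ne_eq, not_true_eq_false, if_false, add_zero]
        rw [hρd i, Complex.normSq_ofReal]
        exact div_self (ne_of_gt (mul_pos (hd i) (hd i)))
      · simp [h, Complex.sq_norm]
    simp_rw [h1, Finset.sum_add_distrib]
    congr 1
    simp
  rw [hsplit] at h0
  nlinarith [h0]

lemma witness_exists {n : ℕ} (ρ : Matrix (Fin n) (Fin n) ℂ)
    (hρ : ρ.PosSemidef) (htr : ρ.trace = 1)
    (hd : ∀ i, 0 < (ρ i i).re) (hn : 0 < n) :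
    ∃ r : ℝ, (((r : ℂ) • Matrix.diagonal (fun i => ρ i i) - ρ)).PosSemidef := by
  haveI : Nonempty (Fin n) := ⟨⟨0, hn⟩⟩
  set d : Fin n → ℝ := fun i => (ρ i i).re with hdd
  have hρd : ∀ i, ρ i i = ((d i : ℝ) : ℂ) := by
    intro i
    have h := congrFun (congrFun hρ.1 i) i
    rw [Matrix.conjTranspose_apply] at h
    have him : (ρ i i).im = 0 := by
      have := congrArg Complex.im h
      simp at this; linarith
    exact Complex.ext rfl him
  set m : ℝ := Finset.univ.inf' Finset.univ_nonempty d with hm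
  have hmle : ∀ i, m ≤ d i := fun i => Finset.inf'_le d (Finset.mem_univ i)
  have hmpos : 0 < m := by
    obtain ⟨i0, -, hi0⟩ := Finset.exists_mem_eq_inf' Finset.univ_nonempty d
    rw [hm, hi0]; exact hd i0
  refine ⟨m⁻¹, ?_⟩
  set D : Matrix (Fin n) (Fin n) ℂ := Matrix.diagonal (fun i => ρ i i) with hD
  have hDH : Dᴴ = D := by
    rw [hD, Matrix.diagonal_conjTranspose,
      show (star fun i => ρ i i) = fun i => ρ i i from funext fun i => by
        rw [Pi.star_apply, hρd i]; exact Complex.conj_ofReal _]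
  have hMH : (((m⁻¹ : ℝ) : ℂ) • D - ρ).IsHermitian := by
    rw [Matrix.IsHermitian, Matrix.conjTranspose_sub, Matrix.conjTranspose_smul, hDH, hρ.1.eq]
    congr 1
    simp
  refine posSemidef_of_re hMH ?_
  intro x
  obtain ⟨B, hB⟩ := psd_exists_conjTranspose_mul_self hρ
  have hq : star x ⬝ᵥ (((m⁻¹ : ℝ) : ℂ) • D - ρ) *ᵥ x
      = ((m⁻¹ : ℝ) : ℂ) * (star x ⬝ᵥ D *ᵥ x) - star x ⬝ᵥ ρ *ᵥ x := by
    rw [Matrix.sub_mulVec, Matrix.smul_mulVec, dotProduct_sub, dotProduct_smul, smul_eq_mul]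
  have hDform : star x ⬝ᵥ D *ᵥ x = ((∑ i, d i * Complex.normSq (x i) : ℝ) : ℂ) := by
    push_cast
    rw [dotProduct]
    apply Finset.sum_congr rfl
    intro i _
    rw [hD, Matrix.mulVec_diagonal, hρd i]
    rw [show (star x) i = (starRingEnd ℂ) (x i) from rfl]
    rw [show ((Complex.normSq (x i) : ℝ) : ℂ) = x i * (starRingEnd ℂ) (x i) from (Complex.mul_conj _).symm]
    ring
  have hρform : star x ⬝ᵥ ρ *ᵥ x = ((∑ k, Complex.normSq ((B *ᵥ x) k) : ℝ) : ℂ) := by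
    rw [hB, ← Matrix.mulVec_mulVec, dotProduct_mulVec, ← Matrix.star_mulVec]
    push_cast
    rw [dotProduct]
    apply Finset.sum_congr rfl
    intro k _
    rw [show (star (B *ᵥ x)) k = (starRingEnd ℂ) ((B *ᵥ x) k) from rfl]
    rw [show ((Complex.normSq ((B *ᵥ x) k) : ℝ) : ℂ) = (B *ᵥ x) k * (starRingEnd ℂ) ((B *ᵥ x) k) from (Complex.mul_conj _).symm]
    ring
  -- sum of normSq of B entries equals 1
  have hBsum : (∑ k, ∑ j, Complex.normSq (B k j)) = 1 := by
    have h2 : ρ.trace = ((∑ k, ∑ j, Complex.normSq (B k j) : ℝ) : ℂ) := by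
      rw [hB, Matrix.trace]
      push_cast
      rw [Finset.sum_comm]
      apply Finset.sum_congr rfl
      intro k _
      simp only [Matrix.diag, Matrix.mul_apply, Matrix.conjTranspose_apply]
      push_cast
      apply Finset.sum_congr rfl
      intro j _
      rw [show ((Complex.normSq (B j k) : ℝ) : ℂ) = B j k * (starRingEnd ℂ) (B j k) from (Complex.mul_conj _).symm,
        show star (B j k) = (starRingEnd ℂ) (B j k) from rfl]
      ring
    rw [htr] at h2
    exact_mod_cast h2.symm
  -- Cauchy-Schwarz bound
  have hCS : (∑ k, Complex.normSq ((B *ᵥ x) k)) ≤ ∑ i, Complex.normSq (x i) := by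
    have hk : ∀ k, Complex.normSq ((B *ᵥ x) k)
        ≤ (∑ j, Complex.normSq (B k j)) * ∑ j, Complex.normSq (x j) := by
      intro k
      have h1 : ‖(B *ᵥ x) k‖ ≤ ∑ j, ‖B k j‖ * ‖x j‖ := by
        rw [Matrix.mulVec, dotProduct]
        refine le_trans (norm_sum_le _ _) ?_
        apply le_of_eq
        exact Finset.sum_congr rfl fun j _ => norm_mul _ _
      have h2 : ‖(B *ᵥ x) k‖ ^ 2
          ≤ (∑ j, ‖B k j‖ * ‖x j‖) ^ 2 :=
        pow_le_pow_left₀ (norm_nonneg _) h1 2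
      have h3 := Finset.sum_mul_sq_le_sq_mul_sq Finset.univ
        (fun j => ‖B k j‖) (fun j => ‖x j‖)
      rw [← Complex.sq_norm]
      refine le_trans h2 (le_trans h3 ?_)
      apply le_of_eq
      congr 1
      · exact Finset.sum_congr rfl fun j _ => Complex.sq_norm _
      · exact Finset.sum_congr rfl fun j _ => Complex.sq_norm _
    calc (∑ k, Complex.normSq ((B *ᵥ x) k))
        ≤ ∑ k, (∑ j, Complex.normSq (B k j)) * ∑ j, Complex.normSq (x j) :=
          Finset.sum_le_sum fun k _ => hk k
      _ = (∑ k, ∑ j, Complex.normSq (B k j)) * ∑ j, Complex.normSq (x j) := by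
          rw [Finset.sum_mul]
      _ = ∑ i, Complex.normSq (x i) := by rw [hBsum, one_mul]
  have hX : (∑ i, Complex.normSq (x i)) ≤ m⁻¹ * ∑ i, d i * Complex.normSq (x i) := by
    rw [Finset.mul_sum]
    refine Finset.sum_le_sum fun i _ => ?_
    rw [← mul_assoc]
    have h1 : 1 ≤ m⁻¹ * d i := by
      rw [← div_eq_inv_mul]
      exact (one_le_div hmpos).mpr (hmle i)
    nlinarith [Complex.normSq_nonneg (x i)]
  rw [hq, hDform, hρform,
    show (((m⁻¹ : ℝ) : ℂ) * ((∑ i, d i * Complex.normSq (x i) : ℝ) : ℂ) - ((∑ k, Complex.normSq ((B *ᵥ x) k) : ℝ) : ℂ))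
      = ((m⁻¹ * (∑ i, d i * Complex.normSq (x i)) - ∑ k, Complex.normSq ((B *ᵥ x) k) : ℝ) : ℂ) by push_cast; ring]
  rw [Complex.ofReal_re]
  linarith


/-- For a density matrix with strictly positive diagonal,
`C_{R,Δ}(ρ) ≥ (1/n) ∑_{i≠j} |ρ_{ij}|²/(dᵢdⱼ)` and consequently
`C_{max,Δ}(ρ) = log₂(1 + C_{R,Δ}(ρ)) ≥ log₂(1 + (1/n) ∑_{i≠j} |ρ_{ij}|²/(dᵢdⱼ))`. -/
theorem stmt17 {n : ℕ} (ρ : Matrix (Fin n) (Fin n) ℂ)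
    (hρ : ρ.PosSemidef) (htr : ρ.trace = 1)
    (hd : ∀ i, 0 < (ρ i i).re) :
    (1 / (n : ℝ)) * (∑ i, ∑ j, if i ≠ j then
        ‖ρ i j‖ ^ 2 / ((ρ i i).re * (ρ j j).re) else 0)
      ≤ CRobDelta ρ ∧
    Real.logb 2 (1 + (1 / (n : ℝ)) * (∑ i, ∑ j, if i ≠ j then
        ‖ρ i j‖ ^ 2 / ((ρ i i).re * (ρ j j).re) else 0))
      ≤ Real.logb 2 (1 + CRobDelta ρ) := by
  set T : ℝ := (∑ i, ∑ j, if i ≠ j then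
      ‖ρ i j‖ ^ 2 / ((ρ i i).re * (ρ j j).re) else 0) with hT
  rcases Nat.eq_zero_or_pos n with hn | hn
  · subst hn
    have hset : {x : ℝ | ∃ r : ℝ,
        ((r : ℂ) • Matrix.diagonal (fun i => ρ i i) - ρ).PosSemidef ∧ x = r - 1} = Set.univ := by
      ext x
      simp only [Set.mem_setOf_eq, Set.mem_univ, iff_true]
      refine ⟨x + 1, ⟨by ext i j; exact i.elim0, fun y => by simp [dotProduct, Finsupp.sum_fintype]⟩, by ring⟩
    have hinf : CRobDelta ρ = 0 := by
      rw [CRobDelta, hset]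
      have : ¬ BddBelow (Set.univ : Set ℝ) := by
        rintro ⟨b, hb⟩
        have h1 := hb (Set.mem_univ (b - 1))
        linarith
      rw [Real.sInf_of_not_bddBelow this]
    have hT0 : T = 0 := by simp [hT]
    rw [hinf, hT0]
    norm_num
  · have npos : (0 : ℝ) < n := by exact_mod_cast hn
    have hTnn : 0 ≤ T := by
      rw [hT]
      refine Finset.sum_nonneg fun i _ => Finset.sum_nonneg fun j _ => ?_
      split
      · have := hd i; have := hd j
        positivity
      · exact le_rfl
    have hle : (1 / (n : ℝ)) * T ≤ CRobDelta ρ := by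
      rw [CRobDelta]
      apply le_csInf
      · obtain ⟨r, hr⟩ := witness_exists ρ hρ htr hd hn
        exact ⟨r - 1, r, hr, rfl⟩
      · rintro x ⟨r, hPSD, rfl⟩
        have hkey := key_bound ρ hρ hd r hPSD
        rw [← hT] at hkey
        rw [mul_comm, ← div_eq_mul_one_div]
        exact (div_le_iff₀ npos).mpr (by linarith)
    have hSnn : 0 ≤ (1 / (n : ℝ)) * T := by positivity
    refine ⟨hle, ?_⟩
    exact Real.logb_le_logb_of_le one_lt_two (by linarith) (by linarith)
end
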